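/- arXiv:2001.05631 — 6 statements merged into one kernel-verified Lean document; each statement's English description precedes it below -/
import Mathlib

section
/- Fix integers ℓ > r ≥ 3 and let G be an (r-1)-uniform hypergraph with more than C(ℓ-1, r-1) hyperedges. Then G contains a system of distinct representatives of size ℓ. -/
open Finset

/-- Degree of a vertex in a hypergraph (a finite set of hyperedges). -/
def hdeg {V : Type*} [DecidableEq V] (H : Finset (Finset V)) (v : V) : ℕ :=
  (H.filter (fun e => v ∈ e)).card

/-- A system of distinct representatives of size `c`: `c` distinct hyperedges and
`c` distinct vertices, one vertex in each hyperedge. -/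
def HasSDR {V : Type*} (G : Finset (Finset V)) (c : ℕ) : Prop :=
  ∃ (h : Fin c → Finset V) (x : Fin c → V),
    Function.Injective h ∧ Function.Injective x ∧
    ∀ i, h i ∈ G ∧ x i ∈ h i

/-- A hypergraph is linear if any two distinct hyperedges share at most one vertex. -/
def IsLinear {V : Type*} [DecidableEq V] (H : Finset (Finset V)) : Prop :=
  ∀ e ∈ H, ∀ f ∈ H, e ≠ f → (e ∩ f).card ≤ 1

/-- `S` is a copy of the star expansion `S_ℓ⁺` with center `x`: `ℓ` hyperedges,
all containing `x`, any two distinct ones meeting exactly in `{x}`. -/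
def IsStarExpansion {V : Type*} [DecidableEq V] (S : Finset (Finset V)) (x : V) (ℓ : ℕ) : Prop :=
  S.card = ℓ ∧ (∀ e ∈ S, x ∈ e) ∧ ∀ e ∈ S, ∀ f ∈ S, e ≠ f → e ∩ f = {x}

/-- `H` contains `k` pairwise vertex-disjoint copies of the star expansion `S_ℓ⁺`. -/
def ContainsKStarExp {V : Type*} [DecidableEq V] (H : Finset (Finset V)) (k ℓ : ℕ) : Prop :=
  ∃ (S : Fin k → Finset (Finset V)) (x : Fin k → V),
    (∀ i, S i ⊆ H ∧ IsStarExpansion (S i) (x i) ℓ) ∧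
    ∀ i j, i ≠ j → ∀ e ∈ S i, ∀ f ∈ S j, Disjoint e f

/-- `H` contains a Berge copy of the graph `F`: an injection of the vertices and an
injection of the edges of `F` into distinct hyperedges of `H`, each hyperedge
containing the images of the endpoints of its edge. -/
def ContainsBerge {V W : Type*} (H : Finset (Finset V)) (F : SimpleGraph W) : Prop :=
  ∃ (f : W → V) (g : Sym2 W → Finset V),
    Function.Injective f ∧
    Set.InjOn g F.edgeSet ∧
    (∀ e ∈ F.edgeSet, g e ∈ H) ∧
    ∀ e ∈ F.edgeSet, ∀ u ∈ e, f u ∈ g e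

/-- The star `S_ℓ` with `ℓ` edges: center `0` joined to `ℓ` leaves. -/
def starGraph (ℓ : ℕ) : SimpleGraph (Fin (ℓ + 1)) :=
  SimpleGraph.fromRel (fun u _ => u = 0)

/-- `k` pairwise vertex-disjoint copies of the star `S_ℓ`. -/
def kStarGraph (k ℓ : ℕ) : SimpleGraph (Fin k × Fin (ℓ + 1)) :=
  SimpleGraph.fromRel (fun u v => u.1 = v.1 ∧ u.2 = 0)

/-- Turán number for `k` disjoint star expansions `k ⬝ S_ℓ⁺` in `r`-uniform
`n`-vertex hypergraphs. -/
noncomputable def exKStarExp (n ℓ k r : ℕ) : ℕ :=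
  sSup {c | ∃ H : Finset (Finset (Fin n)), (∀ e ∈ H, e.card = r) ∧
    ¬ ContainsKStarExp H k ℓ ∧ H.card = c}

/-- `G` contains a (not nec. induced) copy of `F`. -/
def ContainsCopy {α β : Type*} (G : SimpleGraph α) (F : SimpleGraph β) : Prop :=
  ∃ f : β → α, Function.Injective f ∧ ∀ a b, F.Adj a b → G.Adj (f a) (f b)

/-- The number of `r`-cliques of a graph on `Fin n`. -/
noncomputable def numKr {n : ℕ} (G : SimpleGraph (Fin n)) (r : ℕ) : ℕ :=
  letI := Classical.decRel G.Adj
  (G.cliqueFinset r).card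

lemma le_choose_of_lt : ∀ n k : ℕ, 1 ≤ k → k < n → n ≤ n.choose k := by
  intro n
  induction n with
  | zero => intro k _ h; omega
  | succ n ih =>
    intro k hk hkn
    rcases eq_or_lt_of_le hk with h1 | h2
    · simp [← h1]
    · obtain ⟨m, rfl⟩ : ∃ m, k = m + 1 := ⟨k - 1, by omega⟩
      rw [Nat.choose_succ_succ]
      simp only [Nat.succ_eq_add_one]
      have h3 : n ≤ n.choose m := ih m (by omega) (by omega)
      have h4 : 0 < n.choose (m + 1) := Nat.choose_pos (by omega)
      omega

lemma choose_defect {n k : ℕ} (hk : 1 ≤ k) (hkn : k < n) :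
    ∀ a ≤ n, a + (n - a).choose k ≤ n.choose k := by
  intro a
  induction a with
  | zero => simp
  | succ a ih =>
    intro ha
    have ih' := ih (by omega)
    by_cases h : k ≤ n - a - 1
    · obtain ⟨m, rfl⟩ : ∃ m, k = m + 1 := ⟨k - 1, by omega⟩
      have hb : n - a = (n - a - 1) + 1 := by omega
      have hrec : (n - a).choose (m + 1)
          = (n - a - 1).choose m + (n - a - 1).choose (m + 1) := by
        rw [hb, Nat.choose_succ_succ]; simp [Nat.succ_eq_add_one]
      have pos : 0 < (n - a - 1).choose m := Nat.choose_pos (by omega)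
      have : n - (a + 1) = n - a - 1 := by omega
      rw [this]
      omega
    · have h0 : (n - (a + 1)).choose k = 0 := Nat.choose_eq_zero_of_lt (by omega)
      have := le_choose_of_lt n k hk hkn
      omega

/-- If `ℓ > r ≥ 3` and `G` is an `(r-1)`-uniform hypergraph with more than
`C(ℓ-1, r-1)` hyperedges, then `G` has an SDR of size `ℓ`. -/
theorem sdr_of_many_edges {V : Type*} [DecidableEq V] (r ℓ : ℕ) (hr : 3 ≤ r) (hrℓ : r < ℓ)
    (G : Finset (Finset V)) (hunif : ∀ e ∈ G, e.card = r - 1)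
    (hcard : (ℓ - 1).choose (r - 1) < G.card) : HasSDR G ℓ := by
  classical
  have hℓ1 : ℓ - 1 ≤ (ℓ - 1).choose (r - 1) :=
    le_choose_of_lt (ℓ - 1) (r - 1) (by omega) (by omega)
  have hGℓ : ℓ ≤ G.card := by omega
  set d := G.card - ℓ with hd
  let inlE : V ↪ V ⊕ Fin d := ⟨Sum.inl, Sum.inl_injective⟩
  let inrE : Fin d ↪ V ⊕ Fin d := ⟨Sum.inr, Sum.inr_injective⟩
  let aug : ↥G → Finset (V ⊕ Fin d) :=
    fun e => ((e : Finset V)).map inlE ∪ Finset.univ.map inrE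
  have hcardG : (Finset.univ : Finset ↥G).card = G.card := by
    simp [Finset.card_univ]
  by_cases hall : ∀ s : Finset ↥G, s.card ≤ (s.biUnion aug).card
  · obtain ⟨f, hfinj, hfm⟩ :=
      (Finset.all_card_le_biUnion_card_iff_exists_injective aug).mp hall
    set T := Finset.univ.filter (fun e : ↥G => (f e).isLeft) with hT
    have hTc : ℓ ≤ T.card := by
      have h1 : (Finset.univ.filter (fun e : ↥G => ¬ (f e).isLeft)).card ≤ d := by
        have : (Finset.univ.filter (fun e : ↥G => ¬ (f e).isLeft)).card
            ≤ ((Finset.univ : Finset (Fin d)).image some).card := by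
          apply Finset.card_le_card_of_injOn (fun e => (f e).getRight?)
          · intro e he
            simp only [Finset.mem_coe, Finset.mem_filter, Sum.not_isLeft] at he
            obtain ⟨j, hj⟩ := Sum.isRight_iff.mp he.2
            simp [hj]
          · intro a ha b hb hab
            simp only [Finset.coe_filter, Set.mem_setOf_eq, Sum.not_isLeft] at ha hb
            obtain ⟨ja, hja⟩ := Sum.isRight_iff.mp ha.2
            obtain ⟨jb, hjb⟩ := Sum.isRight_iff.mp hb.2
            apply hfinj
            have h3 : (f a).getRight? = (f b).getRight? := hab
            rw [hja, hjb] at h3 ⊢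
            simpa using h3
        have h2 : ((Finset.univ : Finset (Fin d)).image some).card ≤ d := by
          apply le_trans (Finset.card_image_le)
          simp
        omega
      have h2 := Finset.card_filter_add_card_filter_not
        (s := (Finset.univ : Finset ↥G)) (p := fun e : ↥G => (f e).isLeft)
      rw [hcardG] at h2
      show ℓ ≤ (Finset.univ.filter (fun e : ↥G => (f e).isLeft)).card
      omega
    obtain ⟨T₂, hsub, hT₂⟩ := Finset.exists_subset_card_eq hTc
    let emb : Fin ℓ → ↥G := fun i => (T₂.equivFin.symm (Fin.cast hT₂.symm i)).1
    have hembinj : Function.Injective emb := by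
      intro i j hij
      have := Subtype.val_injective hij
      have := T₂.equivFin.symm.injective this
      simpa [Fin.ext_iff] using this
    have hmemT : ∀ i, emb i ∈ T₂ := fun i => (T₂.equivFin.symm _).2
    have hleft : ∀ i : Fin ℓ, (f (emb i)).isLeft := by
      intro i
      have := hsub (hmemT i)
      simp only [hT, Finset.mem_filter] at this
      exact this.2
    let x : Fin ℓ → V := fun i => (f (emb i)).getLeft (hleft i)
    have hx : ∀ i, Sum.inl (x i) = f (emb i) := fun i => Sum.inl_getLeft _ _
    refine ⟨fun i => ((emb i : ↥G) : Finset V), x, ?_, ?_, ?_⟩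
    · intro i j hij
      exact hembinj (Subtype.val_injective hij)
    · intro i j hij
      apply hembinj
      apply hfinj
      rw [← hx i, ← hx j, hij]
    · intro i
      refine ⟨(emb i).2, ?_⟩
      show x i ∈ ((emb i : ↥G) : Finset V)
      have hm := hfm (emb i)
      rw [← hx i] at hm
      simp only [aug, Finset.mem_union, Finset.mem_map, Finset.mem_univ] at hm
      rcases hm with ⟨v, hv, hveq⟩ | ⟨j, _, hj⟩
      · have h4 : v = x i := Sum.inl_injective hveq
        rwa [← h4]
      · exact absurd hj (by simp [inrE])
  · push_neg at hall
    obtain ⟨s, hs⟩ := hall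
    exfalso
    have hsne : s.Nonempty := by
      rw [← Finset.card_pos]; omega
    obtain ⟨e₀, he₀⟩ := hsne
    set B : Finset V := s.biUnion (fun e => (e : Finset V)) with hB
    have hsubu : B.map inlE ∪ Finset.univ.map inrE ⊆ s.biUnion aug := by
      intro x hx
      rw [Finset.mem_union] at hx
      rcases hx with hx | hx
      · obtain ⟨v, hv, rfl⟩ := Finset.mem_map.mp hx
        obtain ⟨e, he, hve⟩ := Finset.mem_biUnion.mp hv
        exact Finset.mem_biUnion.mpr ⟨e, he,
          Finset.mem_union_left _ (Finset.mem_map_of_mem _ hve)⟩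
      · exact Finset.mem_biUnion.mpr ⟨e₀, he₀, Finset.mem_union_right _ hx⟩
    have hdisj : Disjoint (B.map inlE) (Finset.univ.map inrE : Finset (V ⊕ Fin d)) := by
      rw [Finset.disjoint_left]
      rintro x hx hx'
      obtain ⟨v, _, rfl⟩ := Finset.mem_map.mp hx
      obtain ⟨j, _, hj⟩ := Finset.mem_map.mp hx'
      exact absurd hj (by simp [inlE, inrE])
    have hcardu : (B.map inlE ∪ Finset.univ.map inrE).card = B.card + d := by
      rw [Finset.card_union_of_disjoint hdisj, Finset.card_map, Finset.card_map]
      simp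
    have hBd : B.card + d < s.card := by
      rw [← hcardu]
      exact lt_of_le_of_lt (Finset.card_le_card hsubu) hs
    have hsG : s.card ≤ G.card := by
      rw [← hcardG]; exact Finset.card_le_card (Finset.subset_univ s)
    -- s injects into powersetCard (r-1) of B
    have hscard : s.card ≤ B.card.choose (r - 1) := by
      have : s.card ≤ (B.powersetCard (r - 1)).card := by
        refine Finset.card_le_card_of_injOn (fun (e : ↥G) => (e.1 : Finset V)) ?_ ?_
        · intro e he
          rw [Finset.mem_coe, Finset.mem_powersetCard]
          exact ⟨fun v hv => Finset.mem_biUnion.mpr ⟨e, he, hv⟩, hunif _ e.2⟩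
        · intro a _ b _ hab
          exact Subtype.val_injective hab
      rwa [Finset.card_powersetCard] at this
    set a := G.card - s.card with ha
    have haℓ : a ≤ ℓ - 1 := by omega
    have hBle : B.card ≤ ℓ - 1 - a := by omega
    have h1 : s.card ≤ (ℓ - 1 - a).choose (r - 1) :=
      le_trans hscard (Nat.choose_le_choose _ hBle)
    have h2 := choose_defect (n := ℓ - 1) (k := r - 1) (by omega) (by omega) a haℓ
    omega
end

section
/- Fix integers ℓ ≥ 1 and r ≥ 2 with ℓ > r. Then every r-uniform hypergraph on n vertices with more than (n/ℓ)·C(ℓ, r) hyperedges contains a Berge-S_ℓ, i.e., ex_r(n, Berge-S_ℓ) ≤ (n/ℓ)·C(ℓ, r). -/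
open Finset

lemma key_choose (k : ℕ) (a b : ℕ) (hka : k ≤ a) (hab : a ≤ b) :
    Nat.choose a (k+1) + b ≤ Nat.choose b (k+1) + a := by
  induction b, hab using Nat.le_induction with
  | base => exact le_refl _
  | succ b hab ih =>
    have h1 : 1 ≤ b.choose k := Nat.choose_pos (le_trans hka hab)
    have h2 := Nat.choose_succ_succ b k
    simp only [Nat.succ_eq_add_one] at h2
    omega

lemma le_choose_of (n k : ℕ) (hk : 1 ≤ k) (hkn : k < n) : n ≤ n.choose k := by
  induction n with
  | zero => omega
  | succ n ih =>
    rcases eq_or_lt_of_le (Nat.lt_succ_iff.mp hkn) with h | h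
    · subst h; simp [Nat.choose_succ_self_right]
    · obtain ⟨m, rfl⟩ : ∃ m, k = m + 1 := ⟨k - 1, by omega⟩
      have h2 := Nat.choose_succ_succ n m
      simp only [Nat.succ_eq_add_one] at h2
      have h3 : 1 ≤ n.choose m := Nat.choose_pos (by omega)
      have := ih (by omega)
      omega

/-- If `ℓ > r ≥ 2` and an `r`-uniform `n`-vertex hypergraph has more than
`(n/ℓ)·C(ℓ, r)` hyperedges, then it contains a Berge-`S_ℓ`. -/
theorem berge_star_upper_large_ell (ℓ r n : ℕ) (hℓ : 1 ≤ ℓ) (hr : 2 ≤ r) (hrℓ : r < ℓ)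
    (H : Finset (Finset (Fin n))) (hunif : ∀ e ∈ H, e.card = r)
    (hcard : ((n : ℝ) / ℓ) * (ℓ.choose r : ℝ) < (H.card : ℝ)) :
    ContainsBerge H (starGraph ℓ) := by
  classical
  have hr1 : 1 ≤ r := by omega
  have hid : ℓ * Nat.choose (ℓ-1) (r-1) = Nat.choose ℓ r * r := by
    have h := Nat.add_one_mul_choose_eq (ℓ-1) (r-1)
    rw [Nat.sub_add_cancel hℓ, Nat.sub_add_cancel hr1] at h
    exact h
  have hsum : ∑ v : Fin n, hdeg H v = r * H.card := by
    have h1 : ∀ v : Fin n, hdeg H v = ∑ e ∈ H, if v ∈ e then 1 else 0 := by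
      intro v; rw [hdeg, Finset.card_filter]
    simp_rw [h1]
    rw [Finset.sum_comm]
    have h2 : ∀ e ∈ H, (∑ v : Fin n, if v ∈ e then 1 else 0) = r := by
      intro e he
      rw [← Finset.card_filter, Finset.filter_univ_mem]
      exact hunif e he
    rw [Finset.sum_congr rfl h2, Finset.sum_const, smul_eq_mul, mul_comm]
  have hnat : n * Nat.choose (ℓ-1) (r-1) < r * H.card := by
    have hℓ0 : (0:ℝ) < (ℓ:ℝ) := by exact_mod_cast (by omega : 0 < ℓ)
    have hr0 : (0:ℝ) < (r:ℝ) := by exact_mod_cast (by omega : 0 < r)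
    rw [div_mul_eq_mul_div, div_lt_iff₀ hℓ0] at hcard
    have hidR : (ℓ:ℝ) * (((ℓ-1).choose (r-1) : ℕ) : ℝ) = ((ℓ.choose r : ℕ) : ℝ) * r := by
      exact_mod_cast congrArg (Nat.cast : ℕ → ℝ) hid
    have hR : ((n * Nat.choose (ℓ-1) (r-1) : ℕ) : ℝ) < ((r * H.card : ℕ) : ℝ) := by
      push_cast
      push_cast at hidR
      nlinarith [mul_lt_mul_of_pos_right hcard hr0]
    exact_mod_cast hR
  obtain ⟨x, hx⟩ : ∃ x : Fin n, Nat.choose (ℓ-1) (r-1) < hdeg H x := by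
    by_contra hcon
    push_neg at hcon
    have hle : ∑ v : Fin n, hdeg H v ≤ n * Nat.choose (ℓ-1) (r-1) := by
      calc ∑ v : Fin n, hdeg H v ≤ ∑ _v : Fin n, Nat.choose (ℓ-1) (r-1) :=
            Finset.sum_le_sum (fun v _ => hcon v)
        _ = n * Nat.choose (ℓ-1) (r-1) := by
            rw [Finset.sum_const, Finset.card_univ, Fintype.card_fin, smul_eq_mul]
    omega
  set E := H.filter (fun e => x ∈ e) with hE
  rw [hdeg] at hx
  have hdE : Nat.choose (ℓ-1) (r-1) < E.card := hx
  have hChoose_ge : ℓ - 1 ≤ Nat.choose (ℓ-1) (r-1) :=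
    le_choose_of (ℓ-1) (r-1) (by omega) (by omega)
  set d := E.card with hd
  have hdℓ : ℓ ≤ d := by omega
  have hEprop : ∀ e ∈ E, e ∈ H ∧ x ∈ e ∧ (e \ {x}).card = r - 1 := by
    intro e he
    rw [hE, Finset.mem_filter] at he
    refine ⟨he.1, he.2, ?_⟩
    rw [Finset.sdiff_singleton_eq_erase, Finset.card_erase_of_mem he.2, hunif e he.1]
  let t : {e // e ∈ E} → Finset ((Fin n) ⊕ (Fin (d - ℓ))) :=
    fun e => (e.val \ {x}).image Sum.inl ∪ Finset.univ.image Sum.inr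
  have hall : ∀ s : Finset {e // e ∈ E}, s.card ≤ (s.biUnion t).card := by
    intro s
    rcases s.eq_empty_or_nonempty with rfl | ⟨e0, he0⟩
    · simp
    set U := s.biUnion (fun e => e.val \ {x}) with hU
    have hsub : U.image Sum.inl ∪ (Finset.univ.image Sum.inr : Finset (Fin n ⊕ Fin (d-ℓ)))
        ⊆ s.biUnion t := by
      intro a ha
      rw [Finset.mem_union] at ha
      rcases ha with ha | ha
      · obtain ⟨u, hu, rfl⟩ := Finset.mem_image.mp ha
        rw [hU] at hu
        obtain ⟨e, hes, hue⟩ := Finset.mem_biUnion.mp hu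
        exact Finset.mem_biUnion.mpr
          ⟨e, hes, Finset.mem_union_left _ (Finset.mem_image_of_mem _ hue)⟩
      · exact Finset.mem_biUnion.mpr ⟨e0, he0, Finset.mem_union_right _ ha⟩
    have hdisj : Disjoint (U.image Sum.inl)
        (Finset.univ.image Sum.inr : Finset (Fin n ⊕ Fin (d-ℓ))) := by
      rw [Finset.disjoint_left]
      intro a ha hb
      obtain ⟨u, _, rfl⟩ := Finset.mem_image.mp ha
      obtain ⟨w, _, hw⟩ := Finset.mem_image.mp hb
      simp at hw
    have hcard2 : (U.image Sum.inl ∪ (Finset.univ.image Sum.inr : Finset (Fin n ⊕ Fin (d-ℓ)))).card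
        = U.card + (d - ℓ) := by
      rw [Finset.card_union_of_disjoint hdisj,
        Finset.card_image_of_injective _ Sum.inl_injective,
        Finset.card_image_of_injective _ Sum.inr_injective,
        Finset.card_univ, Fintype.card_fin]
    have hcount : s.card ≤ Nat.choose U.card (r - 1) := by
      have hinj : Set.InjOn (fun e : {e // e ∈ E} => e.val \ ({x} : Finset (Fin n))) s := by
        intro e1 h1 e2 h2 h12
        apply Subtype.ext
        have hx1 := (hEprop e1.val e1.prop).2.1
        have hx2 := (hEprop e2.val e2.prop).2.1
        have hins : insert x (e1.val \ {x}) = insert x (e2.val \ {x}) := by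
          simp only at h12; rw [h12]
        simpa [Finset.sdiff_singleton_eq_erase, Finset.insert_erase hx1,
          Finset.insert_erase hx2] using hins
      rw [← Finset.card_image_of_injOn hinj]
      have hsub2 : s.image (fun e : {e // e ∈ E} => e.val \ {x}) ⊆ Finset.powersetCard (r-1) U := by
        intro A hA
        obtain ⟨e, hes, rfl⟩ := Finset.mem_image.mp hA
        rw [Finset.mem_powersetCard]
        exact ⟨by rw [hU]; exact Finset.subset_biUnion_of_mem (fun e : {e // e ∈ E} => e.val \ ({x} : Finset (Fin n))) hes, (hEprop e.val e.prop).2.2⟩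
      calc (s.image (fun e : {e // e ∈ E} => e.val \ {x})).card
          ≤ (Finset.powersetCard (r-1) U).card := Finset.card_le_card hsub2
        _ = Nat.choose U.card (r-1) := by rw [Finset.card_powersetCard]
    have hr1U : r - 1 ≤ U.card := by
      have h1 := (hEprop e0.val e0.prop).2.2
      have hs : e0.val \ {x} ⊆ U := by rw [hU]; exact Finset.subset_biUnion_of_mem (fun e : {e // e ∈ E} => e.val \ ({x} : Finset (Fin n))) he0
      calc r - 1 = (e0.val \ {x}).card := h1.symm
        _ ≤ U.card := Finset.card_le_card hs
    have hscard_le_d : s.card ≤ d := by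
      have h := Finset.card_le_univ s
      rwa [Fintype.card_coe] at h
    have hfinal : s.card ≤ U.card + (d - ℓ) := by
      by_cases hUc : ℓ ≤ U.card
      · omega
      · have hkey := key_choose (r-2) U.card (ℓ-1) (by omega) (by omega)
        have hr2 : r - 2 + 1 = r - 1 := by omega
        rw [hr2] at hkey
        omega
    calc s.card ≤ U.card + (d - ℓ) := hfinal
      _ = _ := hcard2.symm
      _ ≤ _ := Finset.card_le_card hsub
  obtain ⟨f, hfinj, hfmem⟩ := (Finset.all_card_le_biUnion_card_iff_exists_injective t).mp hall
  have hLcard : ℓ ≤ (Finset.univ.filter (fun e : {e // e ∈ E} => (f e).isLeft)).card := by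
    have hRcard : (Finset.univ.filter (fun e : {e // e ∈ E} => ¬ (f e).isLeft)).card
        ≤ (Finset.univ.image Sum.inr : Finset (Fin n ⊕ Fin (d - ℓ))).card := by
      apply Finset.card_le_card_of_injOn f
      · intro e he
        rw [Finset.mem_coe, Finset.mem_filter] at he
        have hm : f e ∈ (e.val \ {x}).image Sum.inl ∪ Finset.univ.image Sum.inr := hfmem e
        cases hfe : f e with
        | inl a => rw [hfe] at he; simp at he
        | inr b => exact Finset.mem_image.mpr ⟨b, Finset.mem_univ b, rfl⟩
      · exact fun a _ b _ h => hfinj h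
    rw [Finset.card_image_of_injective _ Sum.inr_injective, Finset.card_univ,
      Fintype.card_fin] at hRcard
    have hsplit := Finset.card_filter_add_card_filter_not
      (s := (Finset.univ : Finset {e // e ∈ E})) (p := fun e => (f e).isLeft)
    rw [Finset.card_univ, Fintype.card_coe] at hsplit
    omega
  obtain ⟨B, hBL, hBcard⟩ := Finset.exists_subset_card_eq hLcard
  let σ := B.equivFinOfCardEq hBcard
  let idx : Fin ℓ → {e // e ∈ E} := fun i => (σ.symm i).val
  have idxinj : Function.Injective idx := fun i j h => σ.symm.injective (Subtype.ext h)
  have hidxL : ∀ i, (f (idx i)).isLeft := fun i =>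
    (Finset.mem_filter.mp (hBL (σ.symm i).prop)).2
  let v : Fin ℓ → Fin n := fun i => ((f (idx i)).getLeft?).getD x
  have hv : ∀ i, f (idx i) = Sum.inl (v i) := by
    intro i
    have h := hidxL i
    cases hfe : f (idx i) with
    | inl a => simp [v, hfe]
    | inr b => rw [hfe] at h; simp at h
  have hvmem : ∀ i, v i ∈ (idx i).val \ ({x} : Finset (Fin n)) := by
    intro i
    have hm : f (idx i) ∈ ((idx i).val \ {x}).image Sum.inl ∪ Finset.univ.image Sum.inr :=
      hfmem (idx i)
    rw [hv i] at hm
    rcases Finset.mem_union.mp hm with h | h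
    · obtain ⟨u, hu, he⟩ := Finset.mem_image.mp h
      rw [Sum.inl.injEq] at he
      rwa [← he]
    · obtain ⟨u, _, he⟩ := Finset.mem_image.mp h
      simp at he
  have hvx : ∀ i, v i ≠ x := by
    intro i
    have := hvmem i
    rw [Finset.mem_sdiff, Finset.mem_singleton] at this
    exact this.2
  have hvinj : Function.Injective v := by
    intro i j hij
    apply idxinj
    apply hfinj
    rw [hv i, hv j, hij]
  have hedgeH : ∀ i, (idx i).val ∈ H ∧ x ∈ (idx i).val :=
    fun i => ⟨(hEprop _ (idx i).prop).1, (hEprop _ (idx i).prop).2.1⟩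
  have hedgeinj : Function.Injective (fun i => (idx i).val) :=
    fun i j h => idxinj (Subtype.ext h)
  -- edge form
  have hform : ∀ e ∈ (starGraph ℓ).edgeSet, ∃ j : Fin ℓ, e = s(0, Fin.succ j) := by
    intro e he
    induction e using Sym2.ind with
    | _ a b =>
      rw [SimpleGraph.mem_edgeSet] at he
      have hadj : a ≠ b ∧ (a = 0 ∨ b = 0) := by
        simpa [starGraph, SimpleGraph.fromRel_adj] using he
      rcases hadj.2 with rfl | rfl
      · have hb : b ≠ 0 := fun h => hadj.1 h.symm
        exact ⟨b.pred hb, by rw [Fin.succ_pred]⟩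
      · have ha : a ≠ 0 := hadj.1
        exact ⟨a.pred ha, by rw [Fin.succ_pred, Sym2.eq_swap]⟩
  have hformInj : ∀ (j j' : Fin ℓ),
      (s(0, Fin.succ j) : Sym2 (Fin (ℓ+1))) = s(0, Fin.succ j') → j = j' := by
    intro j j' h
    rw [Sym2.eq_iff] at h
    rcases h with ⟨-, h⟩ | ⟨h, -⟩
    · exact Fin.succ_injective _ h
    · exact absurd h.symm (Fin.succ_ne_zero j')
  refine ⟨Fin.cases x v,
    fun e => if he : ∃ j : Fin ℓ, e = s(0, Fin.succ j) then (idx he.choose).val else ∅,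
    ?_, ?_, ?_, ?_⟩
  · intro a b hab
    induction a using Fin.cases with
    | zero =>
      induction b using Fin.cases with
      | zero => rfl
      | succ j =>
        simp only [Fin.cases_zero, Fin.cases_succ] at hab
        exact absurd hab.symm (hvx j)
    | succ i =>
      induction b using Fin.cases with
      | zero =>
        simp only [Fin.cases_zero, Fin.cases_succ] at hab
        exact absurd hab (hvx i)
      | succ j =>
        simp only [Fin.cases_succ] at hab
        rw [hvinj hab]
  · intro e1 h1 e2 h2 hg
    have he1 := hform e1 h1
    have he2 := hform e2 h2
    simp only [dif_pos he1, dif_pos he2] at hg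
    have : he1.choose = he2.choose := hedgeinj hg
    rw [he1.choose_spec, he2.choose_spec, this]
  · intro e he
    have he' := hform e he
    simp only [dif_pos he']
    exact (hedgeH _).1
  · intro e he u hu
    have he' := hform e he
    simp only [dif_pos he']
    have hspec := he'.choose_spec
    rw [hspec, Sym2.mem_iff] at hu
    rcases hu with rfl | rfl
    · rw [Fin.cases_zero]
      exact (hedgeH _).2
    · rw [Fin.cases_succ]
      have := hvmem he'.choose
      rw [Finset.mem_sdiff] at this
      exact this.1
end

section
/- Fix integers 1 ≤ ℓ ≤ r with r ≥ 2. Then every r-uniform hypergraph on n vertices with more than ((ℓ-1)/r)·n hyperedges contains a Berge-S_ℓ, i.e., ex_r(n, Berge-S_ℓ) ≤ ((ℓ-1)/r)·n. -/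
open Finset

private lemma star_edge_aux {ℓ : ℕ} (e : Sym2 (Fin (ℓ+1))) (he : e ∈ (starGraph ℓ).edgeSet) :
    ∃ v : Fin (ℓ+1), v ≠ 0 ∧ e = s(0, v) := by
  induction e using Sym2.ind with
  | _ u v =>
    rw [SimpleGraph.mem_edgeSet, starGraph, SimpleGraph.fromRel_adj] at he
    obtain ⟨hne, h0⟩ := he
    rcases h0 with h | h
    · exact ⟨v, by rw [h] at hne; exact (Ne.symm hne), by rw [h]⟩
    · exact ⟨u, by rw [h] at hne; exact hne, by rw [h]; exact Sym2.eq_swap⟩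

private lemma buildBerge_aux {n ℓ : ℕ} (H : Finset (Finset (Fin n))) (x : Fin n)
    (edge : Fin ℓ → Finset (Fin n)) (hedgeinj : Function.Injective edge)
    (hedgeH : ∀ i, edge i ∈ H) (hxedge : ∀ i, x ∈ edge i)
    (leaf : Fin ℓ → Fin n) (hleafinj : Function.Injective leaf)
    (hleaf : ∀ i, leaf i ∈ (edge i).erase x) :
    ContainsBerge H (starGraph ℓ) := by
  classical
  have hleafx : ∀ i, leaf i ≠ x := fun i => (Finset.mem_erase.mp (hleaf i)).1
  have hleafmem : ∀ i, leaf i ∈ edge i := fun i => (Finset.mem_erase.mp (hleaf i)).2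
  set ed : Fin (ℓ+1) → Finset (Fin n) := fun v => if h : v = 0 then ∅ else edge (v.pred h) with hed
  refine ⟨fun v => if h : v = 0 then x else leaf (v.pred h),
    Sym2.lift ⟨fun u v => if u = 0 then ed v else if v = 0 then ed u else ∅, ?_⟩, ?_, ?_, ?_, ?_⟩
  · intro a b
    by_cases ha : a = 0 <;> by_cases hb : b = 0 <;> simp [ha, hb]
  · intro a b hab
    by_cases ha : a = 0 <;> by_cases hb : b = 0 <;> simp [ha, hb] at hab ⊢
    · exact absurd hab.symm (hleafx _)
    · exact absurd hab (hleafx _)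
    · have := hleafinj hab
      rwa [Fin.pred_inj] at this
  · intro e1 h1 e2 h2 hg
    obtain ⟨v1, hv1, rfl⟩ := star_edge_aux e1 h1
    obtain ⟨v2, hv2, rfl⟩ := star_edge_aux e2 h2
    simp only [Sym2.lift_mk, if_pos rfl, hed, dif_neg hv1, dif_neg hv2] at hg
    have := hedgeinj hg
    rw [Fin.pred_inj] at this
    rw [this]
  · intro e he
    obtain ⟨v, hv, rfl⟩ := star_edge_aux e he
    simp only [Sym2.lift_mk, if_pos rfl, hed, dif_neg hv]
    exact hedgeH _
  · intro e he u hu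
    obtain ⟨v, hv, rfl⟩ := star_edge_aux e he
    simp only [Sym2.lift_mk, if_pos rfl, hed, dif_neg hv]
    rw [Sym2.mem_iff] at hu
    rcases hu with rfl | rfl
    · simp only [dif_pos rfl]
      exact hxedge _
    · simp only [dif_neg hv]
      exact hleafmem _

/-- If `1 ≤ ℓ ≤ r` and an `r`-uniform `n`-vertex hypergraph has more than
`((ℓ-1)/r)·n` hyperedges, then it contains a Berge-`S_ℓ`. -/
theorem berge_star_upper_small_ell (ℓ r n : ℕ) (hℓ : 1 ≤ ℓ) (hr : 2 ≤ r) (hℓr : ℓ ≤ r)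
    (H : Finset (Finset (Fin n))) (hunif : ∀ e ∈ H, e.card = r)
    (hcard : (((ℓ : ℝ) - 1) / r) * n < (H.card : ℝ)) :
    ContainsBerge H (starGraph ℓ) := by
  classical
  -- Step 1: find a vertex of degree ≥ ℓ
  have hsum : ∑ v : Fin n, (H.filter (fun e => v ∈ e)).card = r * H.card := by
    simp_rw [Finset.card_filter]
    rw [Finset.sum_comm]
    rw [Finset.sum_congr rfl (fun e he => ?_), Finset.sum_const, smul_eq_mul, mul_comm]
    simp [Finset.card_filter] at *
    exact hunif e he
  have hrpos : (0:ℝ) < r := by positivity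
  have hx : ∃ x : Fin n, ℓ ≤ (H.filter (fun e => x ∈ e)).card := by
    by_contra hc
    push_neg at hc
    have h2 : r * H.card ≤ n * (ℓ - 1) := by
      rw [← hsum]
      calc ∑ v : Fin n, (H.filter (fun e => v ∈ e)).card
          ≤ ∑ _v : Fin n, (ℓ - 1) :=
            Finset.sum_le_sum (fun v _ => Nat.le_sub_one_of_lt (hc v))
        _ = n * (ℓ - 1) := by simp [mul_comm]
    have h4 : ((ℓ:ℝ) - 1) * n < r * H.card := by
      rw [div_mul_eq_mul_div, div_lt_iff₀ hrpos] at hcard; linarith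
    have h5 : ((ℓ:ℝ) - 1) = ((ℓ - 1 : ℕ) : ℝ) := by
      rw [Nat.cast_sub hℓ]; norm_num
    rw [h5] at h4
    have h6 : (ℓ - 1) * n < r * H.card := by exact_mod_cast h4
    rw [mul_comm n] at h2
    omega
  obtain ⟨x, hxdeg⟩ := hx
  obtain ⟨E, hEsub, hEcard⟩ := Finset.exists_subset_card_eq hxdeg
  have hEH : ∀ e ∈ E, e ∈ H ∧ x ∈ e := by
    intro e he
    have := hEsub he
    simpa [Finset.mem_filter] using this
  -- Step 2: Hall condition for distinct leaves
  have hall : ∀ s : Finset ↥E,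
      s.card ≤ (s.biUnion (fun e => (e : Finset (Fin n)).erase x)).card := by
    intro s
    rcases Nat.lt_or_ge s.card 2 with h2s | h2s
    · rcases Nat.lt_or_ge s.card 1 with h1s | h1s
      · omega
      · have h1 : s.card = 1 := by omega
        obtain ⟨e, rfl⟩ := Finset.card_eq_one.mp h1
        rw [Finset.singleton_biUnion, Finset.card_erase_of_mem (hEH _ e.2).2,
          hunif _ (hEH _ e.2).1]
        omega
    · obtain ⟨e, he, f, hf, hef⟩ := Finset.one_lt_card.mp h2s
      have hce : (e : Finset (Fin n)).card = r := hunif _ (hEH _ e.2).1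
      have hcf : (f : Finset (Fin n)).card = r := hunif _ (hEH _ f.2).1
      have hne : (e : Finset (Fin n)) ≠ (f : Finset (Fin n))  := by
        intro h; exact hef (Subtype.ext h)
      have hinter : ((e : Finset (Fin n)) ∩ f).card < r := by
        rw [← hce]
        apply Finset.card_lt_card
        rw [Finset.ssubset_iff_subset_ne]
        refine ⟨Finset.inter_subset_left, fun h => hne ?_⟩
        apply Finset.eq_of_subset_of_card_le
        · rw [← h]; exact Finset.inter_subset_right
        · omega
      have hunion : r + 1 ≤ ((e : Finset (Fin n)) ∪ f).card := by
        have := Finset.card_union_add_card_inter (e : Finset (Fin n)) f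
        omega
      have hsub : ((e : Finset (Fin n)) ∪ f).erase x ⊆
          s.biUnion (fun e => (e : Finset (Fin n)).erase x) := by
        intro a ha
        rw [Finset.mem_erase, Finset.mem_union] at ha
        rw [Finset.mem_biUnion]
        rcases ha.2 with h | h
        · exact ⟨e, he, Finset.mem_erase.mpr ⟨ha.1, h⟩⟩
        · exact ⟨f, hf, Finset.mem_erase.mpr ⟨ha.1, h⟩⟩
      have hkey : r ≤ (s.biUnion (fun e => (e : Finset (Fin n)).erase x)).card := by
        calc r ≤ (((e : Finset (Fin n)) ∪ f).erase x).card := by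
              rw [Finset.card_erase_of_mem
                (Finset.mem_union_left _ (hEH _ e.2).2)]
              omega
          _ ≤ _ := Finset.card_le_card hsub
      have hsℓ : s.card ≤ ℓ := by
        calc s.card ≤ Fintype.card ↥E := Finset.card_le_univ s
          _ = ℓ := by rw [Fintype.card_coe, hEcard]
      omega
  obtain ⟨leaf, hleafinj, hleafmem⟩ :=
    (Finset.all_card_le_biUnion_card_iff_existsInjective'
      (fun e : ↥E => (e : Finset (Fin n)).erase x)).mp hall
  have hEft : Fintype.card ↥E = ℓ := by rw [Fintype.card_coe, hEcard]
  let eqv : Fin ℓ ≃ ↥E := (Fintype.equivFinOfCardEq hEft).symm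
  exact buildBerge_aux H x (fun i => ↑(eqv i))
    (fun a b hab => eqv.injective (Subtype.ext hab))
    (fun i => (hEH _ (eqv i).2).1) (fun i => (hEH _ (eqv i).2).2)
    (fun i => leaf (eqv i)) (fun a b hab => eqv.injective (hleafinj hab))
    (fun i => hleafmem (eqv i))
end

section
/- Fix integers ℓ ≤ r with r dividing n and n > r. Then there exists an r-uniform (ℓ-1)-regular hypergraph on n vertices; consequently there is an r-uniform n-vertex Berge-S_ℓ-free hypergraph with exactly ((ℓ-1)/r)·n hyperedges. -/
open Finset

def sedge (n r : ℕ) (hn : 0 < n) (s i : ℕ) : Finset (Fin n) :=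
  (Finset.range r).image (fun t => ⟨(s + i * r + t) % n, Nat.mod_lt _ hn⟩)

lemma mem_sedge {n r : ℕ} (hn : 0 < n) (hr : 0 < r) (hdvd : r ∣ n)
    {s i : ℕ} (hs : s ≤ n) (hi : i < n / r) (x : Fin n) :
    x ∈ sedge n r hn s i ↔ ((x : ℕ) + n - s) % n / r = i := by
  have hin : i * r + r ≤ n := by
    have h1 : (i + 1) * r ≤ (n / r) * r := Nat.mul_le_mul_right r (Nat.succ_le_of_lt hi)
    rw [Nat.div_mul_cancel hdvd] at h1
    nlinarith [h1]
  constructor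
  · rintro hx
    simp only [sedge, Finset.mem_image, Finset.mem_range] at hx
    obtain ⟨t, ht, rfl⟩ := hx
    show ((s + i * r + t) % n + n - s) % n / r = i
    have h2 : (s + i * r + t) % n + n - s = (s + i * r + t) % n + (n - s) := by omega
    rw [h2, Nat.mod_add_mod]
    have h3 : s + i * r + t + (n - s) = i * r + t + n := by omega
    rw [h3, Nat.add_mod_right, Nat.mod_eq_of_lt (by omega)]
    rw [mul_comm, Nat.mul_add_div hr, Nat.div_eq_of_lt ht, add_zero]
  · intro h
    set w := ((x : ℕ) + n - s) % n with hw
    have hwn : w < n := Nat.mod_lt _ hn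
    have hwr : w = i * r + w % r := by
      conv_lhs => rw [← Nat.div_add_mod w r]
      rw [h, mul_comm]
    simp only [sedge, Finset.mem_image, Finset.mem_range]
    refine ⟨w % r, Nat.mod_lt _ hr, ?_⟩
    apply Fin.ext
    show (s + i * r + w % r) % n = (x : ℕ)
    have : s + i * r + w % r = s + w := by omega
    rw [this, hw, Nat.add_mod_mod]
    have h4 : s + ((x : ℕ) + n - s) = (x : ℕ) + n := by omega
    rw [h4, Nat.add_mod_right, Nat.mod_eq_of_lt x.isLt]

lemma sedge_card {n r : ℕ} (hn : 0 < n) {s i : ℕ} (hin : i * r + r ≤ n) :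
    (sedge n r hn s i).card = r := by
  rw [sedge, Finset.card_image_of_injOn, Finset.card_range]
  intro a ha b hb hab
  simp only [Finset.coe_range, Set.mem_Iio] at ha hb
  have h : (s + i * r + a) % n = (s + i * r + b) % n := congrArg Fin.val hab
  have h2 : a ≡ b [MOD n] := Nat.ModEq.add_left_cancel' (s + i * r) h
  have h3 : a % n = b % n := h2
  rw [Nat.mod_eq_of_lt (by omega), Nat.mod_eq_of_lt (by omega)] at h3
  exact h3

lemma sedge_inj {n r : ℕ} (hn : 0 < n) (hr : 0 < r) (hdvd : r ∣ n) (hn2 : 2 * r ≤ n)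
    {s i s' i' : ℕ} (hs : s < r) (hs' : s' < r) (hi : i < n / r) (hi' : i' < n / r)
    (h : sedge n r hn s i = sedge n r hn s' i') : s = s' ∧ i = i' := by
  have key : ∀ (s i s' i' : ℕ), s < r → s' < r → i < n / r → i' < n / r →
      s' ≤ s → sedge n r hn s i = sedge n r hn s' i' → s = s' ∧ i = i' := by
    clear h hs hs' hi hi' s i s' i'
    intro s i s' i' hs hs' hi hi' hle h
    have hrn : r ≤ n := by omega
    have hin : i * r + r ≤ n := by
      have h1 : (i + 1) * r ≤ (n / r) * r := Nat.mul_le_mul_right r (Nat.succ_le_of_lt hi)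
      rw [Nat.div_mul_cancel hdvd] at h1; nlinarith [h1]
    have hmem : ∀ x : Fin n, (((x : ℕ) + n - s) % n / r = i) ↔
        (((x : ℕ) + n - s') % n / r = i') := by
      intro x
      rw [← mem_sedge hn hr hdvd (by omega) hi x, h,
        mem_sedge hn hr hdvd (by omega) hi' x]
    -- step A: i = i'
    have hA : i' = i := by
      have hx0 := hmem ⟨(s + i * r) % n, Nat.mod_lt _ hn⟩
      have hL : ((s + i * r) % n + n - s) % n / r = i := by
        have h2 : (s + i * r) % n + n - s = (s + i * r) % n + (n - s) := by omega
        rw [h2, Nat.mod_add_mod]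
        have h3 : s + i * r + (n - s) = i * r + n := by omega
        rw [h3, Nat.add_mod_right, Nat.mod_eq_of_lt (by omega), Nat.mul_div_cancel _ hr]
      have hR := (hx0.mp hL)
      have h2 : (s + i * r) % n + n - s' = (s + i * r) % n + (n - s') := by omega
      rw [h2, Nat.mod_add_mod] at hR
      have h3 : s + i * r + (n - s') = (s - s') + i * r + n := by omega
      rw [h3, Nat.add_mod_right, Nat.mod_eq_of_lt (by omega)] at hR
      have h4 : (s - s') + i * r = r * i + (s - s') := by rw [add_comm, mul_comm]
      rw [h4, Nat.mul_add_div hr, Nat.div_eq_of_lt (by omega), add_zero] at hR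
      omega
    have hseq : s = s' := by
      by_contra hne
      have hd : 0 < s - s' := by omega
      have hu := hmem ⟨(s' + i * r + (s - s' - 1)) % n, Nat.mod_lt _ hn⟩
      have hR : ((s' + i * r + (s - s' - 1)) % n + n - s') % n / r = i' := by
        have h2 : (s' + i * r + (s - s' - 1)) % n + n - s'
            = (s' + i * r + (s - s' - 1)) % n + (n - s') := by omega
        rw [h2, Nat.mod_add_mod]
        have h3 : s' + i * r + (s - s' - 1) + (n - s') = i * r + (s - s' - 1) + n := by omega
        rw [h3, Nat.add_mod_right, Nat.mod_eq_of_lt (by omega)]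
        have h4 : i * r + (s - s' - 1) = r * i + (s - s' - 1) := by ring
        rw [h4, Nat.mul_add_div hr, Nat.div_eq_of_lt (by omega), add_zero, hA]
      have hL := hu.mpr hR
      have h2 : (s' + i * r + (s - s' - 1)) % n + n - s
          = (s' + i * r + (s - s' - 1)) % n + (n - s) := by omega
      rw [h2, Nat.mod_add_mod] at hL
      have h3 : s' + i * r + (s - s' - 1) + (n - s) = i * r + (n - 1) := by omega
      rw [h3] at hL
      rcases Nat.eq_zero_or_pos i with hi0 | hipos
      · subst hi0
        simp only [Nat.zero_mul, Nat.zero_add] at hL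
        rw [Nat.mod_eq_of_lt (by omega)] at hL
        have : r ≤ n - 1 := by omega
        have := Nat.one_le_div_iff hr |>.mpr this
        omega
      · have h5 : i * r + (n - 1) = (i * r - 1) + n := by
          have : 1 ≤ i * r := by nlinarith
          omega
        rw [h5, Nat.add_mod_right, Nat.mod_eq_of_lt (by omega)] at hL
        have h6 : i * r - 1 = r * (i - 1) + (r - 1) := by
          obtain ⟨k, rfl⟩ : ∃ k, i = k + 1 := ⟨i - 1, by omega⟩
          have hx : (k + 1) * r = r * k + r := by ring
          simp only [Nat.add_sub_cancel]
          omega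
        rw [h6, Nat.mul_add_div hr, Nat.div_eq_of_lt (by omega), add_zero] at hL
        omega
    exact ⟨hseq, hA.symm⟩
  rcases le_total s' s with hle | hle
  · exact key s i s' i' hs hs' hi hi' hle h
  · obtain ⟨h1, h2⟩ := key s' i' s i hs' hs hi' hi hle h.symm
    exact ⟨h1.symm, h2.symm⟩

/-- If `ℓ ≤ r`, `r ∣ n` and `n > r`, then there is an `r`-uniform `(ℓ-1)`-regular
hypergraph on `n` vertices; consequently there is an `r`-uniform `n`-vertex
Berge-`S_ℓ`-free hypergraph with exactly `((ℓ-1)/r)·n` hyperedges. -/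
theorem berge_star_lower_small_ell (ℓ r n : ℕ) (hℓ : 1 ≤ ℓ) (hℓr : ℓ ≤ r)
    (hdvd : r ∣ n) (hn : r < n) :
    (∃ H : Finset (Finset (Fin n)), (∀ e ∈ H, e.card = r) ∧ ∀ v, hdeg H v = ℓ - 1) ∧
    (∃ H : Finset (Finset (Fin n)), (∀ e ∈ H, e.card = r) ∧
      ¬ ContainsBerge H (starGraph ℓ) ∧ H.card = (ℓ - 1) * n / r) := by
  have hr : 0 < r := lt_of_lt_of_le hℓ hℓr
  have hn0 : 0 < n := lt_trans hr hn
  have hn2 : 2 * r ≤ n := by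
    obtain ⟨q, rfl⟩ := hdvd
    have hq : 2 ≤ q := by nlinarith
    nlinarith
  set P := (Finset.range (ℓ - 1)) ×ˢ (Finset.range (n / r)) with hP
  set H := P.image (fun p => sedge n r hn0 p.1 p.2) with hH
  have hinj : Set.InjOn (fun p : ℕ × ℕ => sedge n r hn0 p.1 p.2) ↑P := by
    rintro ⟨s, i⟩ hp ⟨s', i'⟩ hp' he
    simp only [hP, Finset.coe_product, Set.mem_prod, Finset.mem_coe, Finset.mem_range] at hp hp'
    obtain ⟨h1, h2⟩ := sedge_inj hn0 hr hdvd hn2 (by omega) (by omega) hp.2 hp'.2 he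
    exact Prod.ext h1 h2
  have huni : ∀ e ∈ H, e.card = r := by
    intro e he
    simp only [hH, Finset.mem_image] at he
    obtain ⟨⟨s, i⟩, hp, rfl⟩ := he
    simp only [hP, Finset.mem_product, Finset.mem_range] at hp
    have hin : i * r + r ≤ n := by
      have h1 : (i + 1) * r ≤ (n / r) * r := Nat.mul_le_mul_right r (Nat.succ_le_of_lt hp.2)
      rw [Nat.div_mul_cancel hdvd] at h1; nlinarith [h1]
    exact sedge_card hn0 hin
  have hdegH : ∀ v, hdeg H v = ℓ - 1 := by
    intro v
    unfold hdeg
    rw [hH, Finset.filter_image,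
      Finset.card_image_of_injOn (hinj.mono (Finset.coe_subset.mpr (Finset.filter_subset _ _)))]
    have hset : P.filter (fun p => v ∈ sedge n r hn0 p.1 p.2)
        = (Finset.range (ℓ - 1)).image (fun s => (s, ((v : ℕ) + n - s) % n / r)) := by
      ext ⟨s, i⟩
      simp only [Finset.mem_filter, hP, Finset.mem_product, Finset.mem_range, Finset.mem_image,
        Prod.mk.injEq]
      constructor
      · rintro ⟨⟨hs, hi⟩, hv⟩
        exact ⟨s, hs, rfl, (mem_sedge hn0 hr hdvd (by omega) hi v).mp hv⟩
      · rintro ⟨s', hs', rfl, rfl⟩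
        have hi : ((v : ℕ) + n - s') % n / r < n / r :=
          Nat.div_lt_div_of_lt_of_dvd hdvd (Nat.mod_lt _ hn0)
        exact ⟨⟨hs', hi⟩, (mem_sedge hn0 hr hdvd (by omega) hi v).mpr rfl⟩
    rw [hset, Finset.card_image_of_injOn, Finset.card_range]
    intro a _ b _ hab
    exact congrArg Prod.fst hab
  have hfree : ¬ ContainsBerge H (starGraph ℓ) := by
    rintro ⟨f, g, hf, hg, hgH, hfg⟩
    have hedge : ∀ i : Fin ℓ, s((0 : Fin (ℓ + 1)), i.succ) ∈ (starGraph ℓ).edgeSet := by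
      intro i
      rw [SimpleGraph.mem_edgeSet, starGraph, SimpleGraph.fromRel_adj]
      exact ⟨(Fin.succ_ne_zero i).symm, Or.inl rfl⟩
    have hcard : (Finset.univ : Finset (Fin ℓ)).card
        ≤ (H.filter (fun e => f 0 ∈ e)).card := by
      apply Finset.card_le_card_of_injOn (fun i => g s((0 : Fin (ℓ + 1)), i.succ))
      · intro i _
        rw [Finset.mem_coe, Finset.mem_filter]
        exact ⟨hgH _ (hedge i), hfg _ (hedge i) 0 (Sym2.mem_mk_left _ _)⟩
      · intro a _ b _ hab
        have h := hg (hedge a) (hedge b) hab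
        rw [Sym2.eq_iff] at h
        rcases h with ⟨_, h2⟩ | ⟨h1, _⟩
        · exact Fin.succ_injective _ h2
        · exact absurd h1.symm (Fin.succ_ne_zero b)
    have hd := hdegH (f 0)
    unfold hdeg at hd
    rw [Finset.card_univ, Fintype.card_fin] at hcard
    omega
  refine ⟨⟨H, huni, hdegH⟩, ⟨H, huni, hfree, ?_⟩⟩
  rw [hH, Finset.card_image_of_injOn hinj, hP, Finset.card_product, Finset.card_range,
    Finset.card_range, Nat.mul_div_assoc _ hdvd]
end

section
/- Fix integers ℓ, k ≥ 1 and r ≥ 2. For n sufficiently large, the maximum number of hyperedges in an r-uniform n-vertex hypergraph containing no k pairwise vertex-disjoint copies of the star expansion S_ℓ^+ equals C(n, r) - C(n-k+1, r) + ex_r(n-k+1, S_ℓ^+). -/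
open Finset

section Aux

variable {V W : Type*} [DecidableEq V] [DecidableEq W]

lemma contains_mono {H H' : Finset (Finset V)} {k ℓ : ℕ} (hsub : H ⊆ H')
    (h : ContainsKStarExp H k ℓ) : ContainsKStarExp H' k ℓ := by
  obtain ⟨S, x, h1, h2⟩ := h
  exact ⟨S, x, fun i => ⟨(h1 i).1.trans hsub, (h1 i).2⟩, h2⟩

lemma contains_pushforward {f : V → W} (hf : Function.Injective f)
    {H : Finset (Finset V)} {k ℓ : ℕ} (h : ContainsKStarExp H k ℓ) :
    ContainsKStarExp (H.image (Finset.image f)) k ℓ := by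
  obtain ⟨S, x, h1, h2⟩ := h
  refine ⟨fun i => (S i).image (Finset.image f), fun i => f (x i), fun i => ?_, ?_⟩
  · have hsub := (h1 i).1
    have hcard := (h1 i).2.1
    have hmem := (h1 i).2.2.1
    have hint := (h1 i).2.2.2
    refine ⟨Finset.image_subset_image hsub, ?_, ?_, ?_⟩
    · rw [Finset.card_image_of_injective _ (Finset.image_injective hf), hcard]
    · intro e he
      obtain ⟨e₀, he₀, rfl⟩ := Finset.mem_image.mp he
      exact Finset.mem_image_of_mem f (hmem e₀ he₀)
    · intro e he g hg hne
      obtain ⟨e₀, he₀, rfl⟩ := Finset.mem_image.mp he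
      obtain ⟨g₀, hg₀, rfl⟩ := Finset.mem_image.mp hg
      have hne₀ : e₀ ≠ g₀ := fun hh => hne (by rw [hh])
      rw [← Finset.image_inter _ _ hf, hint e₀ he₀ g₀ hg₀ hne₀, Finset.image_singleton]
  · intro i j hij e he g hg
    obtain ⟨e₀, he₀, rfl⟩ := Finset.mem_image.mp he
    obtain ⟨g₀, hg₀, rfl⟩ := Finset.mem_image.mp hg
    exact (Finset.disjoint_image hf).mpr (h2 i j hij e₀ he₀ g₀ hg₀)

lemma contains_pullback {f : V → W} (hf : Function.Injective f)
    {H : Finset (Finset V)} {k ℓ : ℕ} (hℓ : 1 ≤ ℓ)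
    (h : ContainsKStarExp (H.image (Finset.image f)) k ℓ) : ContainsKStarExp H k ℓ := by
  classical
  obtain ⟨S, x, h1, h2⟩ := h
  -- preimage map on edges
  have hpre : ∀ e' ∈ H.image (Finset.image f), ∃ e ∈ H, e.image f = e' := by
    intro e' he'; exact Finset.mem_image.mp he'
  -- define preimage of an edge
  have key : ∀ i : Fin k, ∃ (T : Finset (Finset V)) (a : V),
      T ⊆ H ∧ IsStarExpansion T a ℓ ∧ ∀ t ∈ T, t.image f ∈ S i := by
    intro i
    have hsub := (h1 i).1
    have hcard := (h1 i).2.1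
    have hmem := (h1 i).2.2.1
    have hint := (h1 i).2.2.2
    -- choose original edges
    have horig : ∀ e' ∈ S i, ∃ e ∈ H, e.image f = e' := fun e' he' => hpre e' (hsub he')
    choose ψ hψH hψ using horig
    -- S i nonempty
    have hSne : (S i).Nonempty := Finset.card_pos.mp (by omega)
    obtain ⟨e'₀, he'₀⟩ := hSne
    have hx0 : x i ∈ e'₀ := hmem e'₀ he'₀
    rw [← hψ e'₀ he'₀] at hx0
    obtain ⟨a, ha, hfa⟩ := Finset.mem_image.mp hx0
    -- T : image of ψ
    refine ⟨(S i).attach.image (fun e' => ψ e'.1 e'.2), a, ?_, ⟨?_, ?_, ?_⟩, ?_⟩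
    · intro t ht
      obtain ⟨⟨e', he'⟩, _, rfl⟩ := Finset.mem_image.mp ht
      exact hψH e' he'
    · rw [Finset.card_image_of_injOn, Finset.card_attach, hcard]
      intro ⟨e', he'⟩ _ ⟨g', hg'⟩ _ hfg
      simp only [Subtype.mk.injEq]
      have h3 : ψ e' he' = ψ g' hg' := hfg
      rw [← hψ e' he', ← hψ g' hg', h3]
    · intro t ht
      obtain ⟨⟨e', he'⟩, _, rfl⟩ := Finset.mem_image.mp ht
      have : f a ∈ e' := hfa ▸ hmem e' he'
      rw [← hψ e' he'] at this
      obtain ⟨b, hb, hfb⟩ := Finset.mem_image.mp this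
      rwa [hf hfb] at hb
    · intro t ht u hu hne
      obtain ⟨⟨e', he'⟩, _, rfl⟩ := Finset.mem_image.mp ht
      obtain ⟨⟨g', hg'⟩, _, rfl⟩ := Finset.mem_image.mp hu
      have hne' : e' ≠ g' := by
        intro hh; subst hh; exact hne rfl
      have hinteq := hint e' he' g' hg' hne'
      ext b
      simp only [Finset.mem_inter, Finset.mem_singleton]
      constructor
      · rintro ⟨hb1, hb2⟩
        have hfb : f b ∈ e' ∩ g' := by
          rw [← hψ e' he', ← hψ g' hg']
          exact Finset.mem_inter.mpr ⟨Finset.mem_image_of_mem f hb1, Finset.mem_image_of_mem f hb2⟩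
        rw [hinteq, Finset.mem_singleton, ← hfa] at hfb
        exact hf hfb
      · rintro rfl
        have hbx : f b ∈ e' ∩ g' := by rw [hinteq]; simp [hfa]
        rw [← hψ e' he', ← hψ g' hg'] at hbx
        obtain ⟨hb1, hb2⟩ := Finset.mem_inter.mp hbx
        obtain ⟨c, hc, hfc⟩ := Finset.mem_image.mp hb1
        obtain ⟨d, hd, hfd⟩ := Finset.mem_image.mp hb2
        exact ⟨(hf hfc) ▸ hc, (hf hfd) ▸ hd⟩
    · intro t ht
      obtain ⟨⟨e', he'⟩, _, rfl⟩ := Finset.mem_image.mp ht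
      rw [hψ e' he']; exact he'
  choose T a hTH hTstar hTim using key
  refine ⟨T, a, fun i => ⟨hTH i, hTstar i⟩, ?_⟩
  intro i j hij e he g hg
  have hd := h2 i j hij (e.image f) (hTim i e he) (g.image f) (hTim j g hg)
  rw [Finset.disjoint_left] at hd ⊢
  intro b hb1 hb2
  exact hd (Finset.mem_image_of_mem f hb1) (Finset.mem_image_of_mem f hb2)

lemma not_contains_empty {k ℓ : ℕ} (hk : 1 ≤ k) (hℓ : 1 ≤ ℓ) :
    ¬ ContainsKStarExp (∅ : Finset (Finset V)) k ℓ := by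
  rintro ⟨S, x, h1, -⟩
  have i : Fin k := ⟨0, hk⟩
  have h := (h1 i).1
  have hc := (h1 i).2.1
  have : (S i).Nonempty := Finset.card_pos.mp (by omega)
  obtain ⟨e, he⟩ := this
  exact absurd (h he) (Finset.notMem_empty e)

lemma exSet_nonempty (n ℓ k r : ℕ) (hk : 1 ≤ k) (hℓ : 1 ≤ ℓ) :
    {c | ∃ H : Finset (Finset (Fin n)), (∀ e ∈ H, e.card = r) ∧
      ¬ ContainsKStarExp H k ℓ ∧ H.card = c}.Nonempty :=
  ⟨0, ∅, by simp, not_contains_empty hk hℓ, by simp⟩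

lemma exSet_bddAbove (n ℓ k r : ℕ) :
    BddAbove {c | ∃ H : Finset (Finset (Fin n)), (∀ e ∈ H, e.card = r) ∧
      ¬ ContainsKStarExp H k ℓ ∧ H.card = c} := by
  refine ⟨Fintype.card (Finset (Fin n)), ?_⟩
  rintro c ⟨H, -, -, rfl⟩
  exact Finset.card_le_univ H

lemma card_le_exKStarExp {n ℓ k r : ℕ} {H : Finset (Finset (Fin n))}
    (hu : ∀ e ∈ H, e.card = r) (hfree : ¬ ContainsKStarExp H k ℓ) :
    H.card ≤ exKStarExp n ℓ k r :=
  le_csSup (exSet_bddAbove n ℓ k r) ⟨H, hu, hfree, rfl⟩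

lemma exKStarExp_le {n ℓ k r b : ℕ} (hk : 1 ≤ k) (hℓ : 1 ≤ ℓ)
    (h : ∀ H : Finset (Finset (Fin n)), (∀ e ∈ H, e.card = r) →
      ¬ ContainsKStarExp H k ℓ → H.card ≤ b) :
    exKStarExp n ℓ k r ≤ b := by
  apply csSup_le (exSet_nonempty n ℓ k r hk hℓ)
  rintro c ⟨H, hu, hfree, rfl⟩
  exact h H hu hfree

lemma exists_extremal (n ℓ k r : ℕ) (hk : 1 ≤ k) (hℓ : 1 ≤ ℓ) :
    ∃ H : Finset (Finset (Fin n)), (∀ e ∈ H, e.card = r) ∧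
      ¬ ContainsKStarExp H k ℓ ∧ H.card = exKStarExp n ℓ k r :=
  Nat.sSup_mem (exSet_nonempty n ℓ k r hk hℓ) (exSet_bddAbove n ℓ k r)

lemma card_le_exKStarExp_of_embed {m ℓ k r : ℕ} (hk : 1 ≤ k) (hℓ : 1 ≤ ℓ)
    {f : Fin m → V} (hf : Function.Injective f)
    {H : Finset (Finset V)} (hrange : ∀ e ∈ H, ∀ x ∈ e, x ∈ Set.range f)
    (hu : ∀ e ∈ H, e.card = r) (hfree : ¬ ContainsKStarExp H k ℓ) :
    H.card ≤ exKStarExp m ℓ k r := by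
  classical
  set pre : Finset V → Finset (Fin m) := fun e => e.preimage f (hf.injOn) with hpre
  have himpre : ∀ e ∈ H, (pre e).image f = e := by
    intro e he
    rw [hpre]
    simp only [Finset.image_preimage]
    apply Finset.filter_true_of_mem
    intro x hx
    exact hrange e he x hx
  set H₀ : Finset (Finset (Fin m)) := H.image pre with hH₀
  have himg : H₀.image (Finset.image f) = H := by
    rw [hH₀, Finset.image_image]
    have : H.image ((Finset.image f) ∘ pre) = H.image id :=
      Finset.image_congr (fun e he => himpre e he)
    rw [this, Finset.image_id]
  have hcard : H₀.card = H.card := by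
    rw [hH₀]
    apply Finset.card_image_of_injOn
    intro e he g hg heq
    rw [← himpre e he, ← himpre g hg, heq]
  have hu₀ : ∀ e ∈ H₀, e.card = r := by
    intro e he
    obtain ⟨e₁, he₁, rfl⟩ := Finset.mem_image.mp he
    have : ((pre e₁).image f).card = (pre e₁).card := Finset.card_image_of_injective _ hf
    rw [himpre e₁ he₁] at this
    rw [← this]; exact hu e₁ he₁
  have hfree₀ : ¬ ContainsKStarExp H₀ k ℓ := by
    intro hcon
    have := contains_pushforward hf hcon
    rw [himg] at this
    exact hfree this
  rw [← hcard]
  exact card_le_exKStarExp hu₀ hfree₀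

/-- Number of `s`-sets in `L` containing a fixed vertex is at most `C(n, s-1)`. -/
lemma card_filter_mem_le {n s : ℕ} (hs : 1 ≤ s) (L : Finset (Finset (Fin n)))
    (hu : ∀ e ∈ L, e.card = s) (u : Fin n) :
    (L.filter (fun e => u ∈ e)).card ≤ n.choose (s - 1) := by
  have := Finset.card_powersetCard (s-1) (univ : Finset (Fin n))
  rw [Finset.card_univ, Fintype.card_fin] at this
  rw [← this]
  apply Finset.card_le_card_of_injOn (fun e => e.erase u)
  · intro e he
    simp only [Finset.mem_coe, Finset.mem_filter] at he ⊢
    rw [Finset.mem_powersetCard]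
    exact ⟨Finset.subset_univ _, by rw [Finset.card_erase_of_mem he.2, hu e he.1]⟩
  · intro e he g hg heq
    simp only [Finset.coe_filter, Set.mem_setOf_eq] at he hg
    have heq' : e.erase u = g.erase u := heq
    rw [← Finset.insert_erase he.2, ← Finset.insert_erase hg.2, heq']

/-- Number of `r`-sets in `H` containing two fixed distinct vertices is at most `C(n, r-2)`. -/
lemma card_filter_mem_mem_le {n r : ℕ} (hr : 2 ≤ r) (H : Finset (Finset (Fin n)))
    (hu : ∀ e ∈ H, e.card = r) {u v : Fin n} (huv : u ≠ v) :
    (H.filter (fun e => v ∈ e ∧ u ∈ e)).card ≤ n.choose (r - 2) := by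
  have := Finset.card_powersetCard (r-2) (univ : Finset (Fin n))
  rw [Finset.card_univ, Fintype.card_fin] at this
  rw [← this]
  apply Finset.card_le_card_of_injOn (fun e => (e.erase v).erase u)
  · intro e he
    simp only [Finset.mem_coe, Finset.mem_filter] at he ⊢
    rw [Finset.mem_powersetCard]
    refine ⟨Finset.subset_univ _, ?_⟩
    rw [Finset.card_erase_of_mem (Finset.mem_erase.mpr ⟨huv, he.2.2⟩),
      Finset.card_erase_of_mem he.2.1, hu e he.1]
    omega
  · intro e he g hg heq
    simp only [Finset.coe_filter, Set.mem_setOf_eq] at he hg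
    have h1 : u ∈ e.erase v := Finset.mem_erase.mpr ⟨huv, he.2.2⟩
    have h2 : u ∈ g.erase v := Finset.mem_erase.mpr ⟨huv, hg.2.2⟩
    have := congrArg (insert u) heq
    rw [Finset.insert_erase h1, Finset.insert_erase h2] at this
    have := congrArg (insert v) this
    rwa [Finset.insert_erase he.2.1, Finset.insert_erase hg.2.1] at this

/-- Edges of `L` meeting a fixed set `W`. -/
lemma card_filter_meet_le {n s : ℕ} (hs : 1 ≤ s) (L : Finset (Finset (Fin n)))
    (hu : ∀ e ∈ L, e.card = s) (W : Finset (Fin n)) :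
    (L.filter (fun e => ¬ Disjoint e W)).card ≤ W.card * n.choose (s - 1) := by
  have hsub : L.filter (fun e => ¬ Disjoint e W) ⊆
      W.biUnion (fun u => L.filter (fun e => u ∈ e)) := by
    intro e he
    rw [Finset.mem_filter, Finset.not_disjoint_iff] at he
    obtain ⟨heL, u, hu1, hu2⟩ := he
    exact Finset.mem_biUnion.mpr ⟨u, hu2, Finset.mem_filter.mpr ⟨heL, hu1⟩⟩
  calc (L.filter (fun e => ¬ Disjoint e W)).card
      ≤ (W.biUnion (fun u => L.filter (fun e => u ∈ e))).card := Finset.card_le_card hsub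
    _ ≤ ∑ u ∈ W, (L.filter (fun e => u ∈ e)).card := Finset.card_biUnion_le
    _ ≤ ∑ _u ∈ W, n.choose (s-1) := Finset.sum_le_sum (fun u _ => card_filter_mem_le hs L hu u)
    _ = W.card * n.choose (s-1) := by rw [Finset.sum_const, smul_eq_mul]

/-- Matching lemma: a uniform hypergraph with many edges contains a large matching. -/
lemma exists_matching {n s : ℕ} (hs : 1 ≤ s) :
    ∀ (j : ℕ) (L : Finset (Finset (Fin n))), (∀ e ∈ L, e.card = s) →
    j * (s * n.choose (s - 1)) < L.card →
    ∃ M ⊆ L, M.card = j + 1 ∧ (M : Set (Finset (Fin n))).Pairwise (fun a b => Disjoint a b) := by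
  intro j
  induction j with
  | zero =>
    intro L hu hc
    simp only [zero_mul] at hc
    obtain ⟨e, he⟩ := Finset.card_pos.mp hc
    refine ⟨{e}, Finset.singleton_subset_iff.mpr he, rfl, ?_⟩
    rw [Finset.coe_singleton]
    exact Set.pairwise_singleton _ _
  | succ j ih =>
    intro L hu hc
    have hLpos : 0 < L.card := lt_of_le_of_lt (Nat.zero_le _) hc
    obtain ⟨e, he⟩ := Finset.card_pos.mp hLpos
    set L' := L.filter (fun t => Disjoint e t) with hL'
    have hmeet : (L.filter (fun t => ¬ Disjoint t e)).card ≤ s * n.choose (s-1) := by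
      have := card_filter_meet_le hs L hu e
      calc (L.filter (fun t => ¬ Disjoint t e)).card ≤ e.card * n.choose (s-1) := this
        _ = s * n.choose (s-1) := by rw [hu e he]
    have hsplit : L.card ≤ L'.card + (L.filter (fun t => ¬ Disjoint t e)).card := by
      rw [hL']
      have : L = L.filter (fun t => Disjoint e t) ∪ L.filter (fun t => ¬ Disjoint t e) := by
        ext t
        simp only [Finset.mem_union, Finset.mem_filter, disjoint_comm]
        tauto
      calc L.card = (L.filter (fun t => Disjoint e t) ∪ L.filter (fun t => ¬ Disjoint t e)).card := by rw [← this]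
        _ ≤ _ := Finset.card_union_le _ _
    have hL'c : j * (s * n.choose (s-1)) < L'.card := by
      have := Nat.succ_mul j (s * n.choose (s-1)) ▸ hc
      omega
    obtain ⟨M', hM'sub, hM'card, hM'pair⟩ := ih L' (fun t ht => hu t (Finset.mem_filter.mp ht).1) hL'c
    have heL' : e ∉ L' := by
      intro heL'
      have hdd := (Finset.mem_filter.mp heL').2
      have hene : e.Nonempty := Finset.card_pos.mp (by rw [hu e he]; omega)
      exact hene.ne_empty ((disjoint_self_iff_empty e).mp hdd)
    have heM' : e ∉ M' := fun h => heL' (hM'sub h)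
    refine ⟨insert e M', ?_, ?_, ?_⟩
    · intro t ht
      rcases Finset.mem_insert.mp ht with rfl | ht
      · exact he
      · exact (Finset.mem_filter.mp (hM'sub ht)).1
    · rw [Finset.card_insert_of_notMem heM', hM'card]
    · rw [Finset.coe_insert]
      refine (haveI : Std.Symm (fun a b : Finset (Fin n) => Disjoint a b) := ⟨fun a b hab => hab.symm⟩; Set.pairwise_insert_of_symm).mpr ⟨hM'pair, ?_⟩
      intro t ht _
      exact (Finset.mem_filter.mp (hM'sub (Finset.mem_coe.mp ht))).2

/-- At a vertex of large degree we can find a star expansion avoiding `W`. -/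
lemma exists_star_at {n ℓ r : ℕ} (hr : 2 ≤ r) (hℓ : 1 ≤ ℓ)
    (H : Finset (Finset (Fin n))) (hu : ∀ e ∈ H, e.card = r) (v : Fin n)
    (W : Finset (Fin n)) (hvW : v ∉ W)
    (hd : W.card * n.choose (r-2) + (ℓ-1) * ((r-1) * n.choose (r-2)) < hdeg H v) :
    ∃ T ⊆ H, IsStarExpansion T v ℓ ∧ ∀ e ∈ T, Disjoint e W := by
  classical
  set E := H.filter (fun e => v ∈ e ∧ Disjoint e W) with hE
  set bad := H.filter (fun e => v ∈ e ∧ ¬ Disjoint e W) with hbad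
  have hsplit : hdeg H v ≤ E.card + bad.card := by
    rw [hdeg, hE, hbad]
    have : H.filter (fun e => v ∈ e) =
        H.filter (fun e => v ∈ e ∧ Disjoint e W) ∪ H.filter (fun e => v ∈ e ∧ ¬ Disjoint e W) := by
      ext e; simp only [Finset.mem_union, Finset.mem_filter]; tauto
    rw [this]
    exact Finset.card_union_le _ _
  have hbadle : bad.card ≤ W.card * n.choose (r-2) := by
    have hsub : bad ⊆ W.biUnion (fun u => H.filter (fun e => v ∈ e ∧ u ∈ e)) := by
      intro e he
      rw [hbad, Finset.mem_filter] at he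
      obtain ⟨heH, hev, hnd⟩ := he
      rw [Finset.not_disjoint_iff] at hnd
      obtain ⟨u, hu1, hu2⟩ := hnd
      exact Finset.mem_biUnion.mpr ⟨u, hu2, Finset.mem_filter.mpr ⟨heH, hev, hu1⟩⟩
    calc bad.card ≤ _ := Finset.card_le_card hsub
      _ ≤ ∑ u ∈ W, (H.filter (fun e => v ∈ e ∧ u ∈ e)).card := Finset.card_biUnion_le
      _ ≤ ∑ u ∈ W, n.choose (r-2) := by
          apply Finset.sum_le_sum
          intro u huW
          exact card_filter_mem_mem_le hr H hu (fun h => hvW (h ▸ huW))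
      _ = W.card * n.choose (r-2) := by rw [Finset.sum_const, smul_eq_mul]
  have hEc : (ℓ-1) * ((r-1) * n.choose (r-2)) < E.card := by omega
  -- the link of v inside E
  set L := E.image (fun e => e.erase v) with hL
  have hLmem : ∀ e ∈ E, v ∈ e := fun e he => (Finset.mem_filter.mp he).2.1
  have hLcard : L.card = E.card := by
    rw [hL]
    apply Finset.card_image_of_injOn
    intro e he g hg heq
    have heq' : e.erase v = g.erase v := heq
    rw [← Finset.insert_erase (hLmem e he), ← Finset.insert_erase (hLmem g (Finset.mem_coe.mp hg)), heq']
  have hLu : ∀ m ∈ L, m.card = r - 1 := by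
    intro m hm
    obtain ⟨e, he, rfl⟩ := Finset.mem_image.mp hm
    rw [Finset.card_erase_of_mem (hLmem e he), hu e (Finset.mem_filter.mp he).1]
  have hr1 : (1:ℕ) ≤ r - 1 := by omega
  have hch : r - 1 - 1 = r - 2 := by omega
  have hmc : (ℓ-1) * ((r-1) * n.choose (r-1-1)) < L.card := by rw [hch, hLcard]; exact hEc
  obtain ⟨M, hML, hMcard, hMpair⟩ := exists_matching hr1 (ℓ-1) L hLu hmc
  have hMcard' : M.card = ℓ := by omega
  -- map back
  have hback : ∀ m ∈ M, v ∉ m ∧ insert v m ∈ E := by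
    intro m hm
    obtain ⟨e, he, rfl⟩ := Finset.mem_image.mp (hML hm)
    exact ⟨Finset.notMem_erase v e, by rw [Finset.insert_erase (hLmem e he)]; exact he⟩
  refine ⟨M.image (insert v), ?_, ⟨?_, ?_, ?_⟩, ?_⟩
  · intro t ht
    obtain ⟨m, hm, rfl⟩ := Finset.mem_image.mp ht
    exact (Finset.mem_filter.mp (hback m hm).2).1
  · rw [Finset.card_image_of_injOn, hMcard']
    intro m hm m' hm' heq
    have heq' : insert v m = insert v m' := heq
    have h1 := (hback m (Finset.mem_coe.mp hm)).1
    have h2 := (hback m' (Finset.mem_coe.mp hm')).1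
    rw [← Finset.erase_insert h1, ← Finset.erase_insert h2, heq']
  · intro t ht
    obtain ⟨m, hm, rfl⟩ := Finset.mem_image.mp ht
    exact Finset.mem_insert_self v m
  · intro t ht u hu' htu
    obtain ⟨m1, hm1, rfl⟩ := Finset.mem_image.mp ht
    obtain ⟨m2, hm2, rfl⟩ := Finset.mem_image.mp hu'
    have hm12 : m1 ≠ m2 := fun h => htu (by rw [h])
    have hdisj := hMpair (Finset.mem_coe.mpr hm1) (Finset.mem_coe.mpr hm2) hm12
    ext z
    simp only [Finset.mem_inter, Finset.mem_insert, Finset.mem_singleton]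
    constructor
    · rintro ⟨hz1 | hz1, hz2 | hz2⟩
      · exact hz1
      · exact hz1
      · exact hz2
      · exact absurd hz2 (Finset.disjoint_left.mp hdisj hz1)
    · rintro rfl
      exact ⟨Or.inl rfl, Or.inl rfl⟩
  · intro e he
    obtain ⟨m, hm, rfl⟩ := Finset.mem_image.mp he
    exact (Finset.mem_filter.mp (hback m hm).2).2.2

/-- A single star gives `ContainsKStarExp _ 1 _`. -/
lemma contains_one {H : Finset (Finset V)} {T : Finset (Finset V)} {y : V} {ℓ : ℕ}
    (hTH : T ⊆ H) (hT : IsStarExpansion T y ℓ) : ContainsKStarExp H 1 ℓ := by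
  refine ⟨fun _ => T, fun _ => y, fun _ => ⟨hTH, hT⟩, ?_⟩
  intro i j hij
  exact absurd (Subsingleton.elim i j) hij

/-- Extending `k` disjoint stars by one further disjoint star. -/
lemma contains_extend {H : Finset (Finset V)} {k ℓ : ℕ}
    (S : Fin k → Finset (Finset V)) (x : Fin k → V)
    (hS : ∀ i, S i ⊆ H ∧ IsStarExpansion (S i) (x i) ℓ)
    (hd : ∀ i j, i ≠ j → ∀ e ∈ S i, ∀ f ∈ S j, Disjoint e f)
    (T : Finset (Finset V)) (y : V) (hTH : T ⊆ H) (hT : IsStarExpansion T y ℓ)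
    (hdT : ∀ i, ∀ e ∈ S i, ∀ f ∈ T, Disjoint e f) :
    ContainsKStarExp H (k+1) ℓ := by
  refine ⟨Fin.snoc S T, Fin.snoc x y, ?_, ?_⟩
  · intro i
    refine Fin.lastCases ?_ ?_ i
    · rw [Fin.snoc_last, Fin.snoc_last]
      exact ⟨hTH, hT⟩
    · intro i'
      rw [Fin.snoc_castSucc, Fin.snoc_castSucc]
      exact hS i'
  · intro i j hij
    rcases Fin.eq_castSucc_or_eq_last i with ⟨i', rfl⟩ | rfl <;>
      rcases Fin.eq_castSucc_or_eq_last j with ⟨j', rfl⟩ | rfl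
    · rw [Fin.snoc_castSucc, Fin.snoc_castSucc]
      exact hd i' j' (fun h => hij (by rw [h]))
    · rw [Fin.snoc_castSucc, Fin.snoc_last]
      exact hdT i'
    · rw [Fin.snoc_last, Fin.snoc_castSucc]
      intro e he f hf
      exact (hdT j' f hf e he).symm
    · exact absurd rfl hij

lemma hdeg_mono {H H' : Finset (Finset V)} (h : H' ⊆ H) (v : V) : hdeg H' v ≤ hdeg H v :=
  Finset.card_le_card (Finset.filter_subset_filter _ h)

/-- Greedy lemma: a uniform hypergraph with small max degree and many edges
contains many disjoint stars. -/
lemma greedy {n ℓ r D : ℕ} (hr : 2 ≤ r) (hℓ : 1 ≤ ℓ) :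
    ∀ (j : ℕ) (H : Finset (Finset (Fin n))), (∀ e ∈ H, e.card = r) →
    (∀ v, hdeg H v ≤ D) →
    exKStarExp n ℓ 1 r + j * (ℓ * r * D) < H.card →
    ContainsKStarExp H (j+1) ℓ := by
  intro j
  induction j with
  | zero =>
    intro H hu hD hc
    show ContainsKStarExp H 1 ℓ
    by_contra hcon
    exact absurd (card_le_exKStarExp hu hcon) (by omega)
  | succ j ih =>
    intro H hu hD hc
    -- find one star
    have h1 : ContainsKStarExp H 1 ℓ := by
      by_contra hcon
      exact absurd (card_le_exKStarExp hu hcon) (by omega)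
    obtain ⟨S₁, x₁, hS₁, -⟩ := h1
    set T := S₁ 0 with hTdef
    set y := x₁ 0 with hydef
    have hTH : T ⊆ H := (hS₁ 0).1
    have hTstar : IsStarExpansion T y ℓ := (hS₁ 0).2
    set WT := T.biUnion id with hWT
    have hWTcard : WT.card ≤ ℓ * r := by
      calc WT.card ≤ ∑ e ∈ T, (id e).card := Finset.card_biUnion_le
        _ = ∑ e ∈ T, r := Finset.sum_congr rfl (fun e he => hu e (hTH he))
        _ = ℓ * r := by rw [Finset.sum_const, smul_eq_mul, hTstar.1]
    set H' := H.filter (fun e => Disjoint e WT) with hH'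
    have hH'card : H.card ≤ H'.card + ℓ * r * D := by
      have hsplit : H.card ≤ H'.card + (H.filter (fun e => ¬ Disjoint e WT)).card := by
        rw [hH']
        have heq : H = H.filter (fun e => Disjoint e WT) ∪ H.filter (fun e => ¬ Disjoint e WT) := by
          ext e; simp only [Finset.mem_union, Finset.mem_filter]; tauto
        conv_lhs => rw [heq]
        exact Finset.card_union_le _ _
      have hbad : (H.filter (fun e => ¬ Disjoint e WT)).card ≤ ℓ * r * D := by
        have hsub : H.filter (fun e => ¬ Disjoint e WT) ⊆
            WT.biUnion (fun u => H.filter (fun e => u ∈ e)) := by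
          intro e he
          rw [Finset.mem_filter, Finset.not_disjoint_iff] at he
          obtain ⟨heH, u, hu1, hu2⟩ := he
          exact Finset.mem_biUnion.mpr ⟨u, hu2, Finset.mem_filter.mpr ⟨heH, hu1⟩⟩
        calc (H.filter (fun e => ¬ Disjoint e WT)).card
            ≤ _ := Finset.card_le_card hsub
          _ ≤ ∑ u ∈ WT, (H.filter (fun e => u ∈ e)).card := Finset.card_biUnion_le
          _ ≤ ∑ _u ∈ WT, D := Finset.sum_le_sum (fun u _ => hD u)
          _ = WT.card * D := by rw [Finset.sum_const, smul_eq_mul]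
          _ ≤ ℓ * r * D := Nat.mul_le_mul_right D hWTcard
      omega
    have hH'c : exKStarExp n ℓ 1 r + j * (ℓ * r * D) < H'.card := by
      rw [add_mul, one_mul] at hc
      omega
    have hH'u : ∀ e ∈ H', e.card = r := fun e he => hu e (Finset.mem_filter.mp he).1
    have hH'D : ∀ v, hdeg H' v ≤ D := fun v => le_trans (hdeg_mono (Finset.filter_subset _ _) v) (hD v)
    obtain ⟨S, x, hS, hd⟩ := ih H' hH'u hH'D hH'c
    apply contains_extend S x
      (fun i => ⟨(hS i).1.trans (Finset.filter_subset _ _), (hS i).2⟩) hd T y hTH hTstar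
    intro i e he f hf
    have hdisj : Disjoint e WT := (Finset.mem_filter.mp ((hS i).1 he)).2
    exact hdisj.mono_right (Finset.subset_biUnion_of_mem id hf)

/-- In a star-free uniform hypergraph every degree is small. -/
lemma hdeg_le_of_free {n ℓ r : ℕ} (hr : 2 ≤ r) (hℓ : 1 ≤ ℓ)
    {H : Finset (Finset (Fin n))} (hu : ∀ e ∈ H, e.card = r)
    (hfree : ¬ ContainsKStarExp H 1 ℓ) (v : Fin n) :
    hdeg H v ≤ (ℓ-1) * ((r-1) * n.choose (r-2)) := by
  by_contra hcon
  have hd : (∅ : Finset (Fin n)).card * n.choose (r-2) + (ℓ-1) * ((r-1) * n.choose (r-2))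
      < hdeg H v := by
    rw [Finset.card_empty]; omega
  obtain ⟨T, hTH, hT, -⟩ := exists_star_at hr hℓ H hu v ∅ (Finset.notMem_empty v) hd
  exact hfree (contains_one hTH hT)

/-- Edges avoiding a vertex are bounded by the Turán number one vertex down. -/
lemma card_filter_not_mem_le {n ℓ k r : ℕ} (hk : 1 ≤ k) (hℓ : 1 ≤ ℓ)
    {H : Finset (Finset (Fin (n+1)))} (hu : ∀ e ∈ H, e.card = r) (v : Fin (n+1))
    (hfree : ¬ ContainsKStarExp (H.filter (fun e => v ∉ e)) k ℓ) :
    (H.filter (fun e => v ∉ e)).card ≤ exKStarExp n ℓ k r := by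
  apply card_le_exKStarExp_of_embed hk hℓ (Fin.succAbove_right_injective (p := v))
  · intro e he x hx
    have hxv : x ≠ v := by
      intro h
      exact (Finset.mem_filter.mp he).2 (h ▸ hx)
    rw [Fin.range_succAbove]
    simpa using hxv
  · exact fun e he => hu e (Finset.mem_filter.mp he).1
  · exact hfree

lemma ex_one_step {ℓ r : ℕ} (hr : 2 ≤ r) (hℓ : 1 ≤ ℓ) (n : ℕ) :
    exKStarExp (n+1) ℓ 1 r ≤ exKStarExp n ℓ 1 r + (ℓ-1) * ((r-1) * (n+1).choose (r-2)) := by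
  obtain ⟨H, hu, hfree, hcard⟩ := exists_extremal (n+1) ℓ 1 r le_rfl hℓ
  set v : Fin (n+1) := ⟨0, Nat.succ_pos n⟩
  have hsplit : H.card ≤ hdeg H v + (H.filter (fun e => v ∉ e)).card := by
    have heq : H = H.filter (fun e => v ∈ e) ∪ H.filter (fun e => v ∉ e) := by
      ext e; simp only [Finset.mem_union, Finset.mem_filter]; tauto
    conv_lhs => rw [heq]
    exact Finset.card_union_le _ _
  have h1 := hdeg_le_of_free hr hℓ hu hfree v
  have h2 := card_filter_not_mem_le le_rfl hℓ hu v
    (fun hcon => hfree (contains_mono (Finset.filter_subset _ _) hcon))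
  omega

lemma ex_telescope {ℓ r : ℕ} (hr : 2 ≤ r) (hℓ : 1 ≤ ℓ) (a d : ℕ) :
    exKStarExp (a+d) ℓ 1 r ≤
      exKStarExp a ℓ 1 r + d * ((ℓ-1) * ((r-1) * (a+d).choose (r-2))) := by
  induction d with
  | zero => simp
  | succ d ih =>
    have hgoal : a + (d+1) = (a+d) + 1 := by omega
    rw [hgoal]
    set c1 := (ℓ-1) * ((r-1) * ((a+d)+1).choose (r-2)) with hc1
    have hstep := ex_one_step hr hℓ (a + d)
    have hmono : (a+d).choose (r-2) ≤ ((a+d)+1).choose (r-2) :=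
      Nat.choose_le_choose _ (by omega)
    have hc : (ℓ-1) * ((r-1) * (a+d).choose (r-2)) ≤ c1 := by
      rw [hc1]; exact Nat.mul_le_mul_left _ (Nat.mul_le_mul_left _ hmono)
    have hm : d * ((ℓ-1) * ((r-1) * (a+d).choose (r-2))) ≤ d * c1 := Nat.mul_le_mul_left d hc
    have hd1 : (d+1) * c1 = d * c1 + c1 := by rw [add_mul, one_mul]
    calc exKStarExp ((a+d)+1) ℓ 1 r ≤ exKStarExp (a+d) ℓ 1 r + c1 := hstep
      _ ≤ (exKStarExp a ℓ 1 r + d * ((ℓ-1) * ((r-1) * (a+d).choose (r-2)))) + c1 :=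
          Nat.add_le_add_right ih c1
      _ ≤ exKStarExp a ℓ 1 r + (d * c1 + c1) := by omega
      _ = exKStarExp a ℓ 1 r + (d+1) * c1 := by rw [hd1]

/-- Asymptotically `C(n-1, r-1)` dominates any multiple of `C(n, r-2)`. -/
lemma choose_asymp (r C : ℕ) (hr : 2 ≤ r) :
    ∃ N, ∀ n ≥ N, C * n.choose (r-2) ≤ (n-1).choose (r-1) := by
  rcases Nat.lt_or_ge r 3 with h3 | h3
  · -- r = 2
    have hr2 : r = 2 := by omega
    subst hr2
    refine ⟨C + 1, fun n hn => ?_⟩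
    norm_num
    have h1 : (n-1).choose 1 = n - 1 := Nat.choose_one_right _
    omega
  · -- r ≥ 3
    refine ⟨2 * C * (r-1) + 2 * r + 6, fun n hn => ?_⟩
    have hpas : n.choose (r-2) ≤ 2 * (n-1).choose (r-2) := by
      have hn1 : n = (n-1) + 1 := by omega
      have hr2 : r - 2 = (r-3) + 1 := by omega
      have hps : n.choose (r-2) = (n-1).choose (r-3) + (n-1).choose ((r-3)+1) := by
        conv_lhs => rw [hn1, hr2]
        exact Nat.choose_succ_succ _ _
      have hmono : (n-1).choose (r-3) ≤ (n-1).choose ((r-3)+1) := by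
        apply Nat.choose_le_succ_of_lt_half_left
        omega
      have heq2 : (n-1).choose ((r-3)+1) = (n-1).choose (r-2) := by rw [← hr2]
      omega
    have hid : (n-1).choose ((r-2)+1) * ((r-2)+1) = (n-1).choose (r-2) * ((n-1) - (r-2)) :=
      Nat.choose_succ_right_eq (n-1) (r-2)
    have hr21 : (r-2) + 1 = r - 1 := by omega
    rw [hr21] at hid
    -- C * n.choose (r-2) * (r-1) ≤ (n-1).choose (r-1) * (r-1)
    have hkey : C * n.choose (r-2) * (r-1) ≤ (n-1).choose (r-1) * (r-1) := by
      calc C * n.choose (r-2) * (r-1) ≤ C * (2 * (n-1).choose (r-2)) * (r-1) := by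
            apply Nat.mul_le_mul_right
            exact Nat.mul_le_mul_left C hpas
        _ = (n-1).choose (r-2) * (2 * C * (r-1)) := by ring
        _ ≤ (n-1).choose (r-2) * ((n-1) - (r-2)) := by
            apply Nat.mul_le_mul_left
            omega
        _ = (n-1).choose (r-1) * (r-1) := hid.symm
    have hrpos : 0 < r - 1 := by omega
    exact Nat.le_of_mul_le_mul_right hkey hrpos

/-- Degree bound: in an `r`-uniform hypergraph on `Fin n` every degree is at
most `C(n-1, r-1)`. -/
lemma hdeg_le {n r : ℕ} (hr : 1 ≤ r) {H : Finset (Finset (Fin n))}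
    (hu : ∀ e ∈ H, e.card = r) (v : Fin n) : hdeg H v ≤ (n-1).choose (r-1) := by
  have hcard : ((univ : Finset (Fin n)).erase v).card = n - 1 := by
    rw [Finset.card_erase_of_mem (Finset.mem_univ v), Finset.card_univ, Fintype.card_fin]
  have := Finset.card_powersetCard (r-1) ((univ : Finset (Fin n)).erase v)
  rw [hcard] at this
  rw [hdeg, ← this]
  apply Finset.card_le_card_of_injOn (fun e => e.erase v)
  · intro e he
    simp only [Finset.mem_coe, Finset.mem_filter] at he ⊢
    rw [Finset.mem_powersetCard]
    constructor
    · intro x hx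
      rw [Finset.mem_erase] at hx ⊢
      exact ⟨hx.1, Finset.mem_univ x⟩
    · rw [Finset.card_erase_of_mem he.2, hu e he.1]
  · intro e he g hg heq
    simp only [Finset.coe_filter, Set.mem_setOf_eq] at he hg
    have heq' : e.erase v = g.erase v := heq
    rw [← Finset.insert_erase he.2, ← Finset.insert_erase hg.2, heq']

lemma pascal_choose (M r : ℕ) (hr : 1 ≤ r) :
    (M+1).choose r = M.choose (r-1) + M.choose r := by
  obtain ⟨t, rfl⟩ : ∃ t, r = t + 1 := ⟨r-1, by omega⟩
  simp only [Nat.add_sub_cancel]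
  exact Nat.choose_succ_succ M t

/-- Main upper bound, by induction on `k`. -/
lemma main_ub (ℓ r : ℕ) (hℓ : 1 ≤ ℓ) (hr : 2 ≤ r) :
    ∀ k, 1 ≤ k → ∃ N, ∀ n ≥ N,
      exKStarExp n ℓ k r ≤ n.choose r - (n-k+1).choose r + exKStarExp (n-k+1) ℓ 1 r := by
  intro k
  induction k with
  | zero => omega
  | succ k ihk =>
    intro _
    rcases Nat.eq_or_lt_of_le (Nat.one_le_iff_ne_zero.mpr (Nat.succ_ne_zero k)) with h1 | h1
    · -- k + 1 = 1, base case
      refine ⟨1, fun n hn => ?_⟩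
      have hk0 : k = 0 := by omega
      subst hk0
      simp only [Nat.zero_add]
      have hm : n - 1 + 1 = n := by omega
      rw [hm]
      omega
    · -- k ≥ 1, inductive step
      have hk1 : 1 ≤ k := by omega
      obtain ⟨N₀, hN₀⟩ := ihk hk1
      set K := k*((ℓ-1)*((r-1))) + k*(ℓ*r*((k+1)*ℓ*r + (ℓ-1)*(r-1))) + 1 with hK
      obtain ⟨N₂, hN₂⟩ := choose_asymp r K hr
      refine ⟨N₀ + N₂ + r + k + 3, fun n hn => ?_⟩
      obtain ⟨M, rfl⟩ : ∃ M, n = M + 1 := ⟨n - 1, by omega⟩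
      set m := M + 1 - (k+1) + 1 with hm
      have hmM : m = M - k + 1 := by omega
      have hmlt : m ≤ M := by omega
      apply exKStarExp_le (by omega) hℓ
      intro H hu hfree
      set B := (M+1).choose (r-2) with hB
      set Dthr := (k+1)*ℓ*r * B + (ℓ-1)*((r-1)*B) with hD
      by_cases hcase : ∃ v, Dthr < hdeg H v
      · -- Case A : high degree vertex
        obtain ⟨v, hv⟩ := hcase
        set H' := H.filter (fun e => v ∉ e) with hH'
        have hfree' : ¬ ContainsKStarExp H' k ℓ := by
          rintro ⟨S, x, hS, hdj⟩
          set W : Finset (Fin (M+1)) := univ.biUnion (fun i : Fin k => (S i).biUnion id) with hWdef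
          have hWcard : W.card ≤ k*ℓ*r := by
            calc W.card ≤ ∑ i : Fin k, ((S i).biUnion id).card := Finset.card_biUnion_le
              _ ≤ ∑ i : Fin k, ℓ * r := by
                  apply Finset.sum_le_sum
                  intro i _
                  calc ((S i).biUnion id).card ≤ ∑ e ∈ S i, (id e).card := Finset.card_biUnion_le
                    _ = ∑ e ∈ S i, r := by
                        apply Finset.sum_congr rfl
                        intro e he
                        exact hu e (Finset.mem_filter.mp ((hS i).1 he)).1
                    _ = ℓ * r := by rw [Finset.sum_const, smul_eq_mul, (hS i).2.1]
              _ = k * (ℓ * r) := by rw [Finset.sum_const, smul_eq_mul, Finset.card_univ, Fintype.card_fin]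
              _ = k*ℓ*r := by ring
          have hvW : v ∉ W := by
            intro hvW
            rw [hWdef] at hvW
            rw [Finset.mem_biUnion] at hvW
            obtain ⟨i, -, hvi⟩ := hvW
            rw [Finset.mem_biUnion] at hvi
            obtain ⟨e, he, hve⟩ := hvi
            exact (Finset.mem_filter.mp ((hS i).1 he)).2 hve
          have hdbig : W.card * B + (ℓ-1) * ((r-1) * B) < hdeg H v := by
            have h1 : W.card * B ≤ (k*ℓ*r) * B := Nat.mul_le_mul_right B hWcard
            have h2 : (k*ℓ*r) * B ≤ (k+1)*ℓ*r*B := by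
              apply Nat.mul_le_mul_right
              apply Nat.mul_le_mul_right
              exact Nat.mul_le_mul_right ℓ (by omega)
            omega
          obtain ⟨T, hTH, hT, hTW⟩ := exists_star_at hr hℓ H hu v W hvW hdbig
          apply hfree
          apply contains_extend S x
            (fun i => ⟨(hS i).1.trans (Finset.filter_subset _ _), (hS i).2⟩) hdj T v hTH hT
          intro i e he f hf
          have heW : e ⊆ W := by
            calc e ⊆ (S i).biUnion id := Finset.subset_biUnion_of_mem id he
              _ ⊆ W := by
                  rw [hWdef]
                  exact Finset.subset_biUnion_of_mem (fun j => (S j).biUnion id) (Finset.mem_univ i)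
          exact Disjoint.mono_left heW (hTW f hf).symm
        -- count
        have hsplit : H.card ≤ hdeg H v + H'.card := by
          have heq : H = H.filter (fun e => v ∈ e) ∪ H.filter (fun e => v ∉ e) := by
            ext e; simp only [Finset.mem_union, Finset.mem_filter]; tauto
          conv_lhs => rw [heq]
          exact Finset.card_union_le _ _
        have hdegle : hdeg H v ≤ M.choose (r-1) := by
          have := hdeg_le (by omega) hu v
          simpa using this
        have hH'le : H'.card ≤ exKStarExp M ℓ k r :=
          card_filter_not_mem_le hk1 hℓ hu v hfree'
        have hIH := hN₀ M (by omega)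
        have hMk : M - k + 1 = m := hmM.symm
        rw [hMk] at hIH
        have hpas := pascal_choose M r (by omega)
        have hmono : m.choose r ≤ M.choose r := Nat.choose_le_choose r hmlt
        omega
      · -- Case B : all degrees small
        push_neg at hcase
        by_contra hbig
        push_neg at hbig
        apply hfree
        -- greedy
        apply greedy hr hℓ k H hu hcase
        -- need : exKStarExp (M+1) ℓ 1 r + k * (ℓ*r*Dthr) < H.card
        have htel : exKStarExp (M+1) ℓ 1 r ≤
            exKStarExp m ℓ 1 r + (k+1-1) * ((ℓ-1) * ((r-1) * (M+1).choose (r-2))) := by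
          have hsum : m + (k+1-1) = M + 1 := by omega
          have := ex_telescope hr hℓ m (k+1-1)
          rw [hsum] at this
          exact this
        have hkk : k + 1 - 1 = k := by omega
        rw [hkk] at htel
        have hasymp := hN₂ (M+1) (by omega)
        simp only [Nat.add_sub_cancel] at hasymp
        rw [← hB] at htel hasymp
        -- (M+1).choose r - m.choose r ≥ M.choose (r-1)
        have hpas := pascal_choose M r (by omega)
        have hmono : m.choose r ≤ M.choose r := Nat.choose_le_choose r hmlt
        -- arithmetic: k*(ℓ*r*Dthr) + k * ((ℓ-1)*((r-1)*B)) + 1 ≤ K * B ≤ M.choose (r-1)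
        have hB1 : 1 ≤ B := Nat.choose_pos (by omega)
        have hexp : K * B = k * (ℓ*r*Dthr) + k * ((ℓ-1) * ((r-1) * B)) + B := by
          rw [hD, hK]; ring
        have harith : k * (ℓ*r*Dthr) + k * ((ℓ-1) * ((r-1) * B)) + 1 ≤ K * B := by omega
        have hBK : K * B ≤ M.choose (r-1) := hasymp
        omega

/-- Lower bound construction. -/
lemma main_lb (ℓ k r : ℕ) (hℓ : 1 ≤ ℓ) (hk : 1 ≤ k) (hr : 2 ≤ r) (n : ℕ) (hn : k + r ≤ n) :
    n.choose r - (n-k+1).choose r + exKStarExp (n-k+1) ℓ 1 r ≤ exKStarExp n ℓ k r := by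
  classical
  set m := n - k + 1 with hm
  have hkn : k - 1 ≤ n := by omega
  have hmkn : m + (k-1) = n := by omega
  -- the special set A of k-1 vertices
  set A : Finset (Fin n) := (univ : Finset (Fin (k-1))).image (Fin.castLE hkn) with hA
  have hAcard : A.card = k - 1 := by
    rw [hA, Finset.card_image_of_injective _ (Fin.castLE_injective hkn), Finset.card_univ,
      Fintype.card_fin]
  have hAmem : ∀ a : Fin n, a ∈ A ↔ (a : ℕ) < k - 1 := by
    intro a
    rw [hA, Finset.mem_image]
    constructor
    · rintro ⟨j, -, rfl⟩
      exact j.isLt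
    · intro h
      exact ⟨⟨a, h⟩, Finset.mem_univ _, rfl⟩
  -- the embedding of Fin m into the rest
  have hφlt : ∀ i : Fin m, (i : ℕ) + (k-1) < n := fun i => by have := i.isLt; omega
  set φ : Fin m → Fin n := fun i => ⟨(i : ℕ) + (k-1), hφlt i⟩ with hφ
  have hφinj : Function.Injective φ := by
    intro i j hij
    rw [hφ] at hij
    have : (i : ℕ) + (k-1) = (j : ℕ) + (k-1) := congrArg Fin.val hij
    exact Fin.ext (by omega)
  have hφA : ∀ i, φ i ∉ A := by
    intro i hiA
    rw [hAmem] at hiA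
    rw [hφ] at hiA
    simp only at hiA
    omega
  -- extremal star-free hypergraph
  obtain ⟨H₀, hu₀, hfree₀, hcard₀⟩ := exists_extremal m ℓ 1 r le_rfl hℓ
  set Himg := H₀.image (Finset.image φ) with hHimg
  set Hbig := ((univ : Finset (Fin n)).powersetCard r) \ ((Aᶜ).powersetCard r) with hHbig
  set H := Hbig ∪ Himg with hH
  have hAc : (Aᶜ : Finset (Fin n)).card = m := by
    rw [Finset.card_compl, hAcard, Fintype.card_fin]
    omega
  -- membership in Hbig
  have hHbigmem : ∀ e, e ∈ Hbig ↔ e.card = r ∧ ¬ Disjoint e A := by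
    intro e
    rw [hHbig, Finset.mem_sdiff, Finset.mem_powersetCard, Finset.mem_powersetCard]
    constructor
    · rintro ⟨⟨-, hcard⟩, hnot⟩
      refine ⟨hcard, fun hdisj => hnot ⟨?_, hcard⟩⟩
      intro x hx
      rw [Finset.mem_compl]
      exact fun hxA => (Finset.disjoint_left.mp hdisj hx) hxA
    · rintro ⟨hcard, hnd⟩
      refine ⟨⟨Finset.subset_univ e, hcard⟩, ?_⟩
      rintro ⟨hsub, -⟩
      apply hnd
      rw [Finset.disjoint_left]
      intro x hx hxA
      exact (Finset.mem_compl.mp (hsub hx)) hxA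
  -- image edges avoid A
  have hImgA : ∀ e ∈ Himg, Disjoint e A := by
    intro e he
    rw [hHimg] at he
    obtain ⟨e₀, -, rfl⟩ := Finset.mem_image.mp he
    rw [Finset.disjoint_left]
    intro a ha haA
    obtain ⟨i, -, rfl⟩ := Finset.mem_image.mp ha
    exact hφA i haA
  have hdisjHH : Disjoint Hbig Himg := by
    rw [Finset.disjoint_right]
    intro e he hbig
    exact ((hHbigmem e).mp hbig).2 (hImgA e he)
  -- uniformity
  have hu : ∀ e ∈ H, e.card = r := by
    intro e he
    rcases Finset.mem_union.mp he with h | h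
    · exact ((hHbigmem e).mp h).1
    · obtain ⟨e₀, he₀, rfl⟩ := Finset.mem_image.mp h
      rw [Finset.card_image_of_injective _ hφinj]
      exact hu₀ e₀ he₀
  -- cardinality
  have hcard : H.card = n.choose r - m.choose r + exKStarExp m ℓ 1 r := by
    rw [hH, Finset.card_union_of_disjoint hdisjHH]
    have h1 : Hbig.card = n.choose r - m.choose r := by
      rw [hHbig, Finset.card_sdiff_of_subset (Finset.powersetCard_mono (Finset.subset_univ _)),
        Finset.card_powersetCard, Finset.card_powersetCard, Finset.card_univ, Fintype.card_fin,
        hAc]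
    have h2 : Himg.card = exKStarExp m ℓ 1 r := by
      rw [hHimg, Finset.card_image_of_injective _ (Finset.image_injective hφinj), hcard₀]
    rw [h1, h2]
  -- freeness
  have hfree : ¬ ContainsKStarExp H k ℓ := by
    rintro ⟨S, x, hS, hdj⟩
    have hex : ∃ i, ∀ e ∈ S i, Disjoint e A := by
      by_contra hcon
      push_neg at hcon
      choose ed hed hnd using hcon
      have hpick : ∀ i, ∃ a, a ∈ ed i ∧ a ∈ A := by
        intro i
        exact Finset.not_disjoint_iff.mp (hnd i)
      choose g hg1 hg2 using hpick
      have hginj : Set.InjOn g (univ : Finset (Fin k)) := by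
        intro i _ j _ hij
        by_contra hne
        have hd := hdj i j hne (ed i) (hed i) (ed j) (hed j)
        exact (Finset.disjoint_left.mp hd (hg1 i)) (hij ▸ hg1 j)
      have hcard' : (univ : Finset (Fin k)).card ≤ A.card :=
        Finset.card_le_card_of_injOn g (fun i _ => hg2 i) hginj
      rw [Finset.card_univ, Fintype.card_fin, hAcard] at hcard'
      omega
    obtain ⟨i, hi⟩ := hex
    have hSimg : S i ⊆ Himg := by
      intro e he
      rcases Finset.mem_union.mp ((hS i).1 he) with h | h
      · exact absurd (hi e he) ((hHbigmem e).mp h).2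
      · exact h
    have h1 : ContainsKStarExp Himg 1 ℓ := contains_one hSimg (hS i).2
    rw [hHimg] at h1
    exact hfree₀ (contains_pullback hφinj hℓ h1)
  calc n.choose r - m.choose r + exKStarExp m ℓ 1 r = H.card := hcard.symm
    _ ≤ exKStarExp n ℓ k r := card_le_exKStarExp hu hfree


end Aux

/-- For `n` large enough, the Turán number of `k` disjoint star expansions
`k·S_ℓ⁺` equals `C(n,r) - C(n-k+1,r) + ex_r(n-k+1, S_ℓ⁺)`. -/
theorem exKStarExp_eq (ℓ k r : ℕ) (hℓ : 1 ≤ ℓ) (hk : 1 ≤ k) (hr : 2 ≤ r) :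
    ∃ N : ℕ, ∀ n ≥ N,
      exKStarExp n ℓ k r =
        n.choose r - (n - k + 1).choose r + exKStarExp (n - k + 1) ℓ 1 r := by
  obtain ⟨N, hub⟩ := main_ub ℓ r hℓ hr k hk
  refine ⟨N + k + r, fun n hn => ?_⟩
  exact le_antisymm (hub n (by omega)) (main_lb ℓ k r hℓ hk hr n (by omega))
end

section
/- Fix integers ℓ, k ≥ 1 and r ≥ 2. For n large enough, every n-vertex r-uniform linear hypergraph with no k pairwise vertex-disjoint copies of S_ℓ^+ has at most ((ℓ-1)/r + (k-1)/(r-1))·(n-k+1) + C(k-1,2)/C(r,2) hyperedges. -/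
open Finset

section Aux
variable {V : Type*} [DecidableEq V]

lemma meet_card_le (H : Finset (Finset V)) (hlin : IsLinear H) (v : V) (F : Finset V)
    (hv : v ∉ F) :
    (H.filter fun e => v ∈ e ∧ ¬ Disjoint e F).card ≤ F.card := by
  classical
  set s := H.filter fun e => v ∈ e ∧ ¬ Disjoint e F with hs
  have hne : ∀ e ∈ s, (e ∩ F).Nonempty := by
    intro e he
    rw [hs, mem_filter] at he
    rcases Finset.not_disjoint_iff.mp he.2.2 with ⟨u, hu1, hu2⟩
    exact ⟨u, mem_inter.mpr ⟨hu1, hu2⟩⟩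
  have key : ∀ e ∈ s, ∀ u, u ∈ e ∩ F → ∀ f ∈ s, u ∈ f ∩ F → e = f := by
    intro e he u hu f hf huf
    by_contra hef
    rw [hs, mem_filter] at he hf
    have h1 : (e ∩ f).card ≤ 1 := hlin e he.1 f hf.1 hef
    have h2 : 1 < (e ∩ f).card := by
      apply Finset.one_lt_card.mpr
      refine ⟨v, mem_inter.mpr ⟨he.2.1, hf.2.1⟩,
        u, mem_inter.mpr ⟨(mem_inter.mp hu).1, (mem_inter.mp huf).1⟩, ?_⟩
      rintro rfl
      exact hv (mem_inter.mp hu).2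
    omega
  apply Finset.card_le_card_of_injOn (fun e => if h : (e ∩ F).Nonempty then h.choose else v)
  · intro e he
    simp only [dif_pos (hne e he)]
    exact (mem_inter.mp (hne e he).choose_spec).2
  · intro e h1 f h2 heq
    rw [mem_coe] at h1 h2
    simp only [dif_pos (hne e h1), dif_pos (hne f h2)] at heq
    refine key e h1 _ (hne e h1).choose_spec f h2 ?_
    rw [heq]
    exact (hne f h2).choose_spec

lemma hdeg_split (H : Finset (Finset V)) (v : V) (G : Finset V) :
    (H.filter fun e => v ∈ e ∧ Disjoint e G).card
      + (H.filter fun e => v ∈ e ∧ ¬ Disjoint e G).card = hdeg H v := by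
  classical
  rw [hdeg, ← Finset.filter_filter, ← Finset.filter_filter]
  exact Finset.card_filter_add_card_filter_not (fun e => Disjoint e G)

lemma exists_star (H H₀ : Finset (Finset V)) (hsub : H₀ ⊆ H)
    (hlin : IsLinear H) (w : V) (F : Finset V) (ℓ : ℕ)
    (hc : ℓ ≤ (H₀.filter fun e => w ∈ e ∧ Disjoint e F).card) :
    ∃ T, T ⊆ H₀ ∧ IsStarExpansion T w ℓ ∧ ∀ e ∈ T, Disjoint e F := by
  classical
  obtain ⟨T, hT1, hT2⟩ := Finset.exists_subset_card_eq hc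
  have hmem : ∀ e ∈ T, e ∈ H₀ ∧ w ∈ e ∧ Disjoint e F := by
    intro e he
    have := hT1 he
    rw [mem_filter] at this
    exact this
  refine ⟨T, fun e he => (hmem e he).1, ⟨hT2, fun e he => (hmem e he).2.1, ?_⟩,
    fun e he => (hmem e he).2.2⟩
  intro e he f hf hef
  have h1 : ({w} : Finset V) ⊆ e ∩ f := by
    rw [Finset.singleton_subset_iff, mem_inter]
    exact ⟨(hmem e he).2.1, (hmem f hf).2.1⟩
  have h2 : (e ∩ f).card ≤ 1 := hlin e (hsub (hmem e he).1) f (hsub (hmem f hf).1) hef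
  exact (Finset.eq_of_subset_of_card_le h1 (by simpa using h2)).symm

lemma deg_bound [Fintype V] (H : Finset (Finset V)) (hlin : IsLinear H)
    (r : ℕ) (huni : ∀ e ∈ H, e.card = r) (v : V) :
    (r - 1) * hdeg H v ≤ Fintype.card V - 1 := by
  classical
  set s := H.filter fun e => v ∈ e with hs
  have hdisj : ∀ e ∈ s, ∀ f ∈ s, e ≠ f → Disjoint (e.erase v) (f.erase v) := by
    intro e he f hf hef
    rw [Finset.disjoint_left]
    intro u hue huf
    have h1 : (e ∩ f).card ≤ 1 :=
      hlin e (mem_of_mem_filter e he) f (mem_of_mem_filter f hf) hef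
    have h2 : 1 < (e ∩ f).card := by
      apply Finset.one_lt_card.mpr
      refine ⟨v, mem_inter.mpr ⟨(mem_filter.mp he).2, (mem_filter.mp hf).2⟩,
        u, mem_inter.mpr ⟨mem_of_mem_erase hue, mem_of_mem_erase huf⟩, ?_⟩
      exact fun hvu => (ne_of_mem_erase hue) hvu.symm
    omega
  have hcard : (s.biUnion fun e => e.erase v).card = ∑ e ∈ s, (e.erase v).card :=
    Finset.card_biUnion hdisj
  have h1 : ∑ e ∈ s, (e.erase v).card = s.card * (r - 1) := by
    rw [Finset.sum_congr rfl (fun e he => ?_), Finset.sum_const, smul_eq_mul]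
    rw [Finset.card_erase_of_mem (mem_filter.mp he).2, huni e (mem_of_mem_filter e he)]
  have h2 : (s.biUnion fun e => e.erase v) ⊆ Finset.univ.erase v := by
    intro u hu
    rcases Finset.mem_biUnion.mp hu with ⟨e, he, hue⟩
    exact Finset.mem_erase.mpr ⟨ne_of_mem_erase hue, mem_univ u⟩
  have h3 := Finset.card_le_card h2
  rw [Finset.card_erase_of_mem (mem_univ v), Finset.card_univ, hcard, h1] at h3
  rw [hdeg, ← hs, mul_comm]
  omega

lemma handshake [Fintype V] (H : Finset (Finset V)) (r : ℕ)
    (huni : ∀ e ∈ H, e.card = r) : ∑ v, hdeg H v = r * H.card := by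
  classical
  have h1 : ∀ v : V, hdeg H v = ∑ e ∈ H, if v ∈ e then 1 else 0 := by
    intro v; rw [hdeg, Finset.card_filter]
  simp_rw [h1]
  rw [Finset.sum_comm]
  have h2 : ∀ e ∈ H, (∑ v : V, if v ∈ e then 1 else 0) = r := by
    intro e he
    rw [← Finset.card_filter]
    have : Finset.univ.filter (fun v => v ∈ e) = e := by
      ext u; simp
    rw [this, huni e he]
  rw [Finset.sum_congr rfl h2, Finset.sum_const, smul_eq_mul, mul_comm]

lemma combine (H : Finset (Finset V)) (ℓ m : ℕ)
    (S : Fin m → Finset (Finset V)) (x : Fin m → V)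
    (hS : ∀ i, S i ⊆ H ∧ IsStarExpansion (S i) (x i) ℓ)
    (hSd : ∀ i j, i ≠ j → ∀ e ∈ S i, ∀ f ∈ S j, Disjoint e f)
    (T : Finset (Finset V)) (w : V) (hT : T ⊆ H) (hTs : IsStarExpansion T w ℓ)
    (hdisj : ∀ e ∈ T, ∀ i, ∀ f ∈ S i, Disjoint e f) :
    ContainsKStarExp H (m + 1) ℓ := by
  refine ⟨Fin.cons T S, Fin.cons w x, ?_, ?_⟩
  · intro i
    rcases Fin.eq_zero_or_eq_succ i with rfl | ⟨j, rfl⟩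
    · simpa using ⟨hT, hTs⟩
    · simpa using hS j
  · intro i j hij e he f hf
    rcases Fin.eq_zero_or_eq_succ i with rfl | ⟨i', rfl⟩ <;>
      rcases Fin.eq_zero_or_eq_succ j with rfl | ⟨j', rfl⟩
    · exact absurd rfl hij
    · simp only [Fin.cons_zero] at he
      simp only [Fin.cons_succ] at hf
      exact hdisj e he j' f hf
    · simp only [Fin.cons_succ] at he
      simp only [Fin.cons_zero] at hf
      exact (hdisj f hf i' e he).symm
    · simp only [Fin.cons_succ] at he hf
      refine hSd i' j' (fun h => hij ?_) e he f hf
      rw [h]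

lemma pack (H : Finset (Finset V)) (hlin : IsLinear H)
    (r ℓ : ℕ) (huni : ∀ e ∈ H, e.card = r) :
    ∀ (m : ℕ) (A F : Finset V), A.card = m → Disjoint A F →
      (∀ v ∈ A, ℓ + (F ∪ A).card + m * (ℓ * r) ≤ hdeg H v) →
      ∃ (S : Fin m → Finset (Finset V)) (x : Fin m → V),
        (∀ i, S i ⊆ H ∧ IsStarExpansion (S i) (x i) ℓ) ∧
        (∀ i j, i ≠ j → ∀ e ∈ S i, ∀ f ∈ S j, Disjoint e f) ∧
        (∀ i, ∀ e ∈ S i, Disjoint e F) := by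
  intro m
  induction m with
  | zero =>
    intro A F _ _ _
    exact ⟨Fin.elim0, Fin.elim0, fun i => i.elim0, fun i => i.elim0, fun i => i.elim0⟩
  | succ m ih =>
    intro A F hAcard hAF hdegs
    obtain ⟨v, hv⟩ : A.Nonempty := card_pos.mp (by omega)
    set G := (F ∪ A).erase v with hGdef
    have hvG : v ∉ G := notMem_erase _ _
    have hmeet := meet_card_le H hlin v G hvG
    have hsplit := hdeg_split H v G
    have hGle : G.card ≤ (F ∪ A).card := card_le_card (erase_subset _ _)
    have hstar : ℓ ≤ (H.filter fun e => v ∈ e ∧ Disjoint e G).card := by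
      have := hdegs v hv
      omega
    obtain ⟨T, hTsub, hTstar, hTdisj⟩ := exists_star H H (Finset.Subset.refl _) hlin v G ℓ hstar
    set W := T.biUnion id with hWdef
    have heW : ∀ e ∈ T, e ⊆ W := by
      intro e he u hu
      exact mem_biUnion.mpr ⟨e, he, hu⟩
    have hWcard : W.card ≤ ℓ * r := by
      calc W.card ≤ ∑ e ∈ T, (id e).card := card_biUnion_le
        _ = ∑ e ∈ T, r := Finset.sum_congr rfl fun e he => huni e (hTsub he)
        _ = ℓ * r := by rw [Finset.sum_const, smul_eq_mul, hTstar.1]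
    have hFG : F ⊆ G := by
      intro u hu
      refine mem_erase.mpr ⟨?_, mem_union_left _ hu⟩
      rintro rfl
      exact (Finset.disjoint_left.mp hAF hv) hu
    have hTF : ∀ e ∈ T, Disjoint e F := fun e he => (hTdisj e he).mono_right hFG
    set A' := A.erase v with hA'def
    set F' := F ∪ W with hF'def
    have hA'card : A'.card = m := by
      rw [hA'def, card_erase_of_mem hv, hAcard]
      omega
    have hA'G : A' ⊆ G := by
      intro u hu
      exact mem_erase.mpr ⟨ne_of_mem_erase hu, mem_union_right _ (mem_of_mem_erase hu)⟩
    have hA'F' : Disjoint A' F' := by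
      rw [hF'def, Finset.disjoint_union_right]
      refine ⟨hAF.mono_left (erase_subset _ _), ?_⟩
      rw [Finset.disjoint_left]
      intro u huA' huW
      rcases mem_biUnion.mp huW with ⟨e, he, hue⟩
      exact (Finset.disjoint_left.mp (hTdisj e he) hue) (hA'G huA')
    have hdeg' : ∀ u ∈ A', ℓ + (F' ∪ A').card + m * (ℓ * r) ≤ hdeg H u := by
      intro u hu
      have h1 := hdegs u (mem_of_mem_erase hu)
      have h2 : (F' ∪ A').card ≤ (F ∪ A).card + W.card := by
        calc (F' ∪ A').card ≤ ((F ∪ A) ∪ W).card := by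
              apply card_le_card
              intro z hz
              rcases mem_union.mp hz with hz | hz
              · rcases mem_union.mp hz with hz | hz
                · exact mem_union_left _ (mem_union_left _ hz)
                · exact mem_union_right _ hz
              · exact mem_union_left _ (mem_union_right _ (mem_of_mem_erase hz))
          _ ≤ (F ∪ A).card + W.card := card_union_le _ _
      have h3 : (m + 1) * (ℓ * r) = m * (ℓ * r) + ℓ * r := by ring
      omega
    obtain ⟨S', x', hS'1, hS'2, hS'3⟩ := ih A' F' hA'card hA'F' hdeg'
    refine ⟨Fin.cons T S', Fin.cons v x', ?_, ?_, ?_⟩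
    · intro i
      rcases Fin.eq_zero_or_eq_succ i with rfl | ⟨j, rfl⟩
      · simpa using ⟨hTsub, hTstar⟩
      · simpa using hS'1 j
    · intro i j hij e he f hf
      rcases Fin.eq_zero_or_eq_succ i with rfl | ⟨i', rfl⟩ <;>
        rcases Fin.eq_zero_or_eq_succ j with rfl | ⟨j', rfl⟩
      · exact absurd rfl hij
      · simp only [Fin.cons_zero] at he
        simp only [Fin.cons_succ] at hf
        have hfW : Disjoint f W := (hS'3 j' f hf).mono_right subset_union_right
        exact (hfW.symm.mono_left (heW e he))
      · simp only [Fin.cons_succ] at he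
        simp only [Fin.cons_zero] at hf
        have heW' : Disjoint e W := (hS'3 i' e he).mono_right subset_union_right
        exact heW'.mono_right (heW f hf)
      · simp only [Fin.cons_succ] at he hf
        refine hS'2 i' j' (fun h => hij ?_) e he f hf
        rw [h]
    · intro i e he
      rcases Fin.eq_zero_or_eq_succ i with rfl | ⟨j, rfl⟩
      · simp only [Fin.cons_zero] at he
        exact hTF e he
      · simp only [Fin.cons_succ] at he
        exact (hS'3 j e he).mono_right subset_union_left

end Aux


set_option maxHeartbeats 1000000 in
/-- Linear Turán upper bound for `k·S_ℓ⁺`: for `n` large enough, every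
`n`-vertex `r`-uniform linear hypergraph with no `k` pairwise vertex-disjoint
copies of `S_ℓ⁺` has at most
`((ℓ-1)/r + (k-1)/(r-1))·(n-k+1) + C(k-1,2)/C(r,2)` hyperedges. -/
theorem linear_forest_upper (ℓ k r : ℕ) (hℓ : 1 ≤ ℓ) (hk : 1 ≤ k) (hr : 2 ≤ r) :
    ∃ N : ℕ, ∀ n ≥ N, ∀ H : Finset (Finset (Fin n)),
      (∀ e ∈ H, e.card = r) → IsLinear H → ¬ ContainsKStarExp H k ℓ →
      (H.card : ℝ) ≤ (((ℓ : ℝ) - 1) / r + ((k : ℝ) - 1) / (r - 1)) * ((n : ℝ) - k + 1)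
        + ((k - 1).choose 2 : ℝ) / (r.choose 2 : ℝ) := by
  classical
  obtain ⟨k', rfl⟩ : ∃ k', k = k' + 1 := ⟨k - 1, by omega⟩
  obtain ⟨r', rfl⟩ : ∃ r', r = r' + 2 := ⟨r - 2, by omega⟩
  obtain ⟨l', rfl⟩ : ∃ l', ℓ = l' + 1 := ⟨ℓ - 1, by omega⟩
  set D := (l' + 1) + (k' + 1) + (k' + 1) * ((l' + 1) * (r' + 2)) + 1 with hD_def
  refine ⟨(k' * k' + l' * k' + (r' + 2) * ((k' + 1) * ((l' + 1) * (r' + 2))) * D) + k' + 2,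
    fun n hn H huni hlin hno => ?_⟩
  obtain ⟨p, rfl⟩ : ∃ p, n = p + k' + 1 := ⟨n - k' - 1, by omega⟩
  set A := Finset.univ.filter (fun v : Fin (p + k' + 1) => D ≤ hdeg H v) with hA_def
  -- degree bound for high-degree vertices
  have hinA : ∀ v : Fin (p + k' + 1), (r' + 1) * hdeg H v ≤ p + k' := by
    intro v
    have h := deg_bound H hlin (r' + 2) huni v
    rw [Fintype.card_fin] at h
    rw [show r' + 2 - 1 = r' + 1 from rfl] at h
    omega
  -- Case 0 : at least k high-degree vertices → contradiction
  by_cases hbig : k' + 1 ≤ A.card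
  · exfalso
    obtain ⟨A', hA'sub, hA'card⟩ := Finset.exists_subset_card_eq hbig
    have hdegs : ∀ v ∈ A', (l' + 1) + ((∅ : Finset (Fin (p + k' + 1))) ∪ A').card
        + (k' + 1) * ((l' + 1) * (r' + 2)) ≤ hdeg H v := by
      intro v hv
      have h1 : D ≤ hdeg H v := (Finset.mem_filter.mp (hA'sub hv)).2
      have h2 : ((∅ : Finset (Fin (p + k' + 1))) ∪ A').card = k' + 1 := by
        rw [Finset.empty_union, hA'card]
      omega
    obtain ⟨S, x, h1, h2, _⟩ := pack H hlin (r' + 2) (l' + 1) huni (k' + 1) A' ∅ hA'card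
      (Finset.disjoint_empty_right _) hdegs
    exact hno ⟨S, x, h1, h2⟩
  push_neg at hbig
  rcases lt_or_eq_of_le (show A.card ≤ k' by omega) with hlt | heq
  · -- Case 1 : at most k-2 high-degree vertices
    set H' := H.filter (fun e => Disjoint e A) with hH'_def
    have hH'sub : H' ⊆ H := Finset.filter_subset _ _
    set P := fun m => ContainsKStarExp H' m (l' + 1) with hP_def
    have hP0 : P 0 := ⟨Fin.elim0, Fin.elim0, fun i => i.elim0, fun i => i.elim0⟩
    have hPk : ¬ P (k' + 1) := by
      rintro ⟨S, x, h1, h2⟩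
      exact hno ⟨S, x, fun i => ⟨(h1 i).1.trans hH'sub, (h1 i).2⟩, h2⟩
    set t := Nat.findGreatest P (k' + 1) with ht_def
    have hPt : P t := Nat.findGreatest_spec (Nat.zero_le _) hP0
    have htle : t ≤ k' + 1 := Nat.findGreatest_le _
    have htlt : t ≤ k' := by
      rcases Nat.lt_or_ge t (k' + 1) with h | h
      · omega
      · exact absurd (by rw [show t = k' + 1 by omega] at hPt; exact hPt) hPk
    have hmax : ¬ P (t + 1) :=
      Nat.findGreatest_is_greatest (k := t + 1) (n := k' + 1) (by omega) (by omega)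
    obtain ⟨S, x, hS1, hS2⟩ := hPt
    set U := Finset.univ.biUnion (fun i : Fin t => (S i).biUnion id) with hU_def
    have hfU : ∀ i, ∀ f ∈ S i, f ⊆ U := by
      intro i f hf u hu
      exact Finset.mem_biUnion.mpr ⟨i, Finset.mem_univ i,
        Finset.mem_biUnion.mpr ⟨f, hf, hu⟩⟩
    have hSi : ∀ i : Fin t, ((S i).biUnion id).card ≤ (l' + 1) * (r' + 2) := by
      intro i
      calc ((S i).biUnion id).card ≤ ∑ e ∈ S i, (id e).card := Finset.card_biUnion_le
        _ = ∑ e ∈ S i, (r' + 2) :=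
            Finset.sum_congr rfl (fun e he => huni e (hH'sub ((hS1 i).1 he)))
        _ = (l' + 1) * (r' + 2) := by
            rw [Finset.sum_const, smul_eq_mul, (hS1 i).2.1]
    have hUcard : U.card ≤ (k' + 1) * ((l' + 1) * (r' + 2)) := by
      calc U.card ≤ ∑ i : Fin t, ((S i).biUnion id).card := Finset.card_biUnion_le
        _ ≤ ∑ _i : Fin t, (l' + 1) * (r' + 2) := Finset.sum_le_sum (fun i _ => hSi i)
        _ = t * ((l' + 1) * (r' + 2)) := by
            rw [Finset.sum_const, Finset.card_univ, Fintype.card_fin, smul_eq_mul]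
        _ ≤ (k' + 1) * ((l' + 1) * (r' + 2)) := Nat.mul_le_mul_right _ (by omega)
    -- maximality: every vertex has few H'-edges avoiding U
    have claim2 : ∀ w : Fin (p + k' + 1),
        (H'.filter fun e => w ∈ e ∧ Disjoint e U).card < l' + 1 := by
      intro w
      by_contra hcon
      push_neg at hcon
      obtain ⟨T, hTsub, hTstar, hTdisj⟩ :=
        exists_star H H' hH'sub hlin w U (l' + 1) hcon
      exact hmax (combine H' (l' + 1) t S x hS1 hS2 T w hTsub hTstar
        (fun e he i f hf => (hTdisj e he).mono_right (hfU i f hf)))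
    have hUA : ∀ v ∈ U, ¬ D ≤ hdeg H v := by
      intro v hv hD
      rcases Finset.mem_biUnion.mp hv with ⟨i, _, hv2⟩
      rcases Finset.mem_biUnion.mp hv2 with ⟨f, hf, hvf⟩
      have hfH' : f ∈ H' := (hS1 i).1 hf
      have : Disjoint f A := (Finset.mem_filter.mp hfH').2
      exact (Finset.disjoint_left.mp this hvf)
        (Finset.mem_filter.mpr ⟨Finset.mem_univ v, hD⟩)
    -- edges of H' meeting U
    have hHm : (H'.filter fun e => ¬ Disjoint e U).card
        ≤ (k' + 1) * ((l' + 1) * (r' + 2)) * D := by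
      have hsub : (H'.filter fun e => ¬ Disjoint e U)
          ⊆ U.biUnion (fun v => H'.filter (fun e => v ∈ e)) := by
        intro e he
        rw [Finset.mem_filter] at he
        rcases Finset.not_disjoint_iff.mp he.2 with ⟨u, hu1, hu2⟩
        exact Finset.mem_biUnion.mpr ⟨u, hu2, Finset.mem_filter.mpr ⟨he.1, hu1⟩⟩
      calc (H'.filter fun e => ¬ Disjoint e U).card
          ≤ (U.biUnion (fun v => H'.filter (fun e => v ∈ e))).card :=
            Finset.card_le_card hsub
        _ ≤ ∑ v ∈ U, (H'.filter (fun e => v ∈ e)).card := Finset.card_biUnion_le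
        _ ≤ U.card * D := by
            rw [← smul_eq_mul]
            apply Finset.sum_le_card_nsmul
            intro v hv
            have h1 : (H'.filter (fun e => v ∈ e)).card ≤ hdeg H v := by
              apply Finset.card_le_card
              exact Finset.filter_subset_filter _ hH'sub
            have h2 := hUA v hv
            omega
        _ ≤ (k' + 1) * ((l' + 1) * (r' + 2)) * D := Nat.mul_le_mul_right _ hUcard
    -- edges of H' avoiding U
    have hHav : (r' + 2) * (H'.filter fun e => Disjoint e U).card
        ≤ (p + k' + 1) * l' := by
      have hh := handshake (H'.filter fun e => Disjoint e U) (r' + 2)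
        (fun e he => huni e (hH'sub (Finset.mem_of_mem_filter e he)))
      have hb : ∀ v : Fin (p + k' + 1),
          hdeg (H'.filter fun e => Disjoint e U) v ≤ l' := by
        intro v
        have hsub : ((H'.filter fun e => Disjoint e U).filter (fun e => v ∈ e))
            ⊆ H'.filter (fun e => v ∈ e ∧ Disjoint e U) := by
          intro e he
          simp only [Finset.mem_filter] at he ⊢
          exact ⟨he.1.1, he.2, he.1.2⟩
        have h2 := (Finset.card_le_card hsub).trans_lt (claim2 v)
        rw [hdeg]
        omega
      have hs : ∑ v : Fin (p + k' + 1), hdeg (H'.filter fun e => Disjoint e U) v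
          ≤ (p + k' + 1) * l' := by
        calc ∑ v : Fin (p + k' + 1), hdeg (H'.filter fun e => Disjoint e U) v
            ≤ (Finset.univ : Finset (Fin (p + k' + 1))).card • l' :=
              Finset.sum_le_card_nsmul _ _ _ (fun v _ => hb v)
          _ = (p + k' + 1) * l' := by
              rw [Finset.card_univ, Fintype.card_fin, smul_eq_mul]
      omega
    -- edges of H meeting A
    have hM : (r' + 1) * (H.filter fun e => ¬ Disjoint e A).card
        ≤ A.card * (p + k') := by
      have hsub : (H.filter fun e => ¬ Disjoint e A)
          ⊆ A.biUnion (fun v => H.filter (fun e => v ∈ e)) := by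
        intro e he
        rw [Finset.mem_filter] at he
        rcases Finset.not_disjoint_iff.mp he.2 with ⟨u, hu1, hu2⟩
        exact Finset.mem_biUnion.mpr ⟨u, hu2, Finset.mem_filter.mpr ⟨he.1, hu1⟩⟩
      have h1 : (H.filter fun e => ¬ Disjoint e A).card
          ≤ ∑ v ∈ A, hdeg H v :=
        (Finset.card_le_card hsub).trans Finset.card_biUnion_le
      calc (r' + 1) * (H.filter fun e => ¬ Disjoint e A).card
          ≤ (r' + 1) * ∑ v ∈ A, hdeg H v := Nat.mul_le_mul_left _ h1
        _ = ∑ v ∈ A, (r' + 1) * hdeg H v := by rw [Finset.mul_sum]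
        _ ≤ A.card * (p + k') := by
            rw [← smul_eq_mul]
            exact Finset.sum_le_card_nsmul _ _ _ (fun v _ => hinA v)
    -- partition of H and H'
    have hpart1 : (H.filter fun e => Disjoint e A).card
        + (H.filter fun e => ¬ Disjoint e A).card = H.card :=
      Finset.card_filter_add_card_filter_not _
    have hpart2 : (H'.filter fun e => Disjoint e U).card
        + (H'.filter fun e => ¬ Disjoint e U).card = H'.card :=
      Finset.card_filter_add_card_filter_not _
    -- assemble in ℝ
    have hA6 : k' * k' + l' * k' + (r' + 2) * ((k' + 1) * ((l' + 1) * (r' + 2))) * D + 1 ≤ p := by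
      omega
    set Mv := (H.filter fun e => ¬ Disjoint e A).card with hMv
    set Hav := (H'.filter fun e => Disjoint e U).card with hHavv
    set Hm := (H'.filter fun e => ¬ Disjoint e U).card with hHmv
    have A1 : (H.card : ℝ) = (Hav : ℝ) + (Hm : ℝ) + (Mv : ℝ) := by
      have : Hav + Hm + Mv = H.card := by
        rw [← hpart1, ← hpart2]
      exact_mod_cast this.symm
    have A2 : ((r' : ℝ) + 1) * Mv ≤ (A.card : ℝ) * ((p : ℝ) + k') := by exact_mod_cast hM
    have A3 : ((r' : ℝ) + 2) * Hav ≤ ((p : ℝ) + k' + 1) * l' := by exact_mod_cast hHav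
    have A4 : (Hm : ℝ) ≤ ((k' : ℝ) + 1) * (((l' : ℝ) + 1) * ((r' : ℝ) + 2)) * D := by
      exact_mod_cast hHm
    have A5 : (A.card : ℝ) + 1 ≤ (k' : ℝ) := by exact_mod_cast hlt
    have A6 : (k' : ℝ) * k' + (l' : ℝ) * k'
        + ((r' : ℝ) + 2) * (((k' : ℝ) + 1) * (((l' : ℝ) + 1) * ((r' : ℝ) + 2))) * D + 1
        ≤ (p : ℝ) := by exact_mod_cast hA6
    have hub : (H.card : ℝ) * (((r' : ℝ) + 1) * ((r' : ℝ) + 2))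
        ≤ (l' : ℝ) * (((r' : ℝ) + 1) * ((p : ℝ) + 1))
          + (k' : ℝ) * (((r' : ℝ) + 2) * ((p : ℝ) + 1)) := by
      have hc0 : (0 : ℝ) ≤ (A.card : ℝ) := Nat.cast_nonneg _
      have hp0 : (0 : ℝ) ≤ (p : ℝ) := Nat.cast_nonneg _
      have hk0 : (0 : ℝ) ≤ (k' : ℝ) := Nat.cast_nonneg _
      have P0 : (H.card : ℝ) * (((r' : ℝ) + 1) * ((r' : ℝ) + 2))
          = (Hav : ℝ) * (((r' : ℝ) + 1) * ((r' : ℝ) + 2))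
            + (Hm : ℝ) * (((r' : ℝ) + 1) * ((r' : ℝ) + 2))
            + (Mv : ℝ) * (((r' : ℝ) + 1) * ((r' : ℝ) + 2)) := by
        rw [A1]; ring
      have P1 : ((r' : ℝ) + 1) * (((r' : ℝ) + 2) * Hav)
          ≤ ((r' : ℝ) + 1) * (((p : ℝ) + k' + 1) * l') :=
        mul_le_mul_of_nonneg_left A3 (by positivity)
      have P2 : (((r' : ℝ) + 1) * ((r' : ℝ) + 2)) * Hm
          ≤ (((r' : ℝ) + 1) * ((r' : ℝ) + 2))
            * (((k' : ℝ) + 1) * (((l' : ℝ) + 1) * ((r' : ℝ) + 2)) * D) :=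
        mul_le_mul_of_nonneg_left A4 (by positivity)
      have P3a : ((r' : ℝ) + 2) * (((r' : ℝ) + 1) * Mv)
          ≤ ((r' : ℝ) + 2) * ((A.card : ℝ) * ((p : ℝ) + k')) :=
        mul_le_mul_of_nonneg_left A2 (by positivity)
      have P3b : (A.card : ℝ) * ((p : ℝ) + k') ≤ ((k' : ℝ) - 1) * ((p : ℝ) + k') :=
        mul_le_mul_of_nonneg_right (by linarith [A5]) (by positivity)
      have P3c : ((r' : ℝ) + 2) * ((A.card : ℝ) * ((p : ℝ) + k'))
          ≤ ((r' : ℝ) + 2) * (((k' : ℝ) - 1) * ((p : ℝ) + k')) :=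
        mul_le_mul_of_nonneg_left P3b (by positivity)
      have P4 : ((r' : ℝ) + 2) * ((k' : ℝ) * k' + (l' : ℝ) * k'
            + ((r' : ℝ) + 2) * (((k' : ℝ) + 1) * (((l' : ℝ) + 1) * ((r' : ℝ) + 2))) * D + 1)
          ≤ ((r' : ℝ) + 2) * p :=
        mul_le_mul_of_nonneg_left A6 (by positivity)
      have Q1 : (0 : ℝ) ≤ (l' : ℝ) * (k' : ℝ) := by positivity
      have Q2 : (0 : ℝ) ≤ ((r' : ℝ) + 2)
          * (((k' : ℝ) + 1) * (((l' : ℝ) + 1) * ((r' : ℝ) + 2)) * D) := by positivity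
      have Q3 : (0 : ℝ) ≤ (r' : ℝ) + 2 := by positivity
      have Q4 : (0 : ℝ) ≤ (k' : ℝ) * ((r' : ℝ) + 2) := by positivity
      linarith [P0, P1, P2, P3a, P3c, P4, Q1, Q2, Q3, Q4]
    -- conclude
    have hchoosepos : (0 : ℝ) ≤ ((k' + 1 - 1).choose 2 : ℝ) / (((r' + 2).choose 2 : ℕ) : ℝ) := by
      positivity
    have hpos : (0 : ℝ) < ((r' : ℝ) + 1) * ((r' : ℝ) + 2) := by positivity
    have hgoal2 : (H.card : ℝ) ≤ (((l' : ℝ)) / ((r' : ℝ) + 2) + (k' : ℝ) / ((r' : ℝ) + 1)) * ((p : ℝ) + 1) := by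
      rw [div_add_div _ _ (by positivity) (by positivity)]
      rw [div_mul_eq_mul_div, le_div_iff₀ (by positivity)]
      linarith [hub]
    calc (H.card : ℝ)
        ≤ (((l' : ℝ)) / ((r' : ℝ) + 2) + (k' : ℝ) / ((r' : ℝ) + 1)) * ((p : ℝ) + 1) := hgoal2
      _ ≤ ((((l' + 1 : ℕ) : ℝ) - 1) / ((r' + 2 : ℕ) : ℝ)
            + (((k' + 1 : ℕ) : ℝ) - 1) / (((r' + 2 : ℕ) : ℝ) - 1))
            * (((p + k' + 1 : ℕ) : ℝ) - ((k' + 1 : ℕ) : ℝ) + 1)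
          + ((k' + 1 - 1).choose 2 : ℝ) / (((r' + 2).choose 2 : ℕ) : ℝ) := by
          push_cast
          have h1 : ((l' : ℝ) + 1 - 1) = (l' : ℝ) := by ring
          have h2 : ((k' : ℝ) + 1 - 1) = (k' : ℝ) := by ring
          have h3 : ((r' : ℝ) + 2 - 1) = (r' : ℝ) + 1 := by ring
          have h4 : ((p : ℝ) + (k' : ℝ) + 1 - ((k' : ℝ) + 1) + 1) = (p : ℝ) + 1 := by ring
          rw [h1, h2, h3, h4]
          have := hchoosepos
          push_cast at this
          linarith
  · -- Case 2 : exactly k-1 high-degree vertices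
    -- every vertex outside A has < ℓ edges avoiding A
    have claim : ∀ w : Fin (p + k' + 1), w ∉ A →
        (H.filter fun e => w ∈ e ∧ Disjoint e A).card < l' + 1 := by
      intro w hw
      by_contra hcon
      push_neg at hcon
      obtain ⟨T, hTsub, hTstar, hTdisj⟩ :=
        exists_star H H (Finset.Subset.refl _) hlin w A (l' + 1) hcon
      set W := T.biUnion id with hW_def
      have heW : ∀ e ∈ T, e ⊆ W := by
        intro e he u hu
        exact Finset.mem_biUnion.mpr ⟨e, he, hu⟩
      have hWcard : W.card ≤ (l' + 1) * (r' + 2) := by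
        calc W.card ≤ ∑ e ∈ T, (id e).card := Finset.card_biUnion_le
          _ = ∑ e ∈ T, (r' + 2) := Finset.sum_congr rfl (fun e he => huni e (hTsub he))
          _ = (l' + 1) * (r' + 2) := by rw [Finset.sum_const, smul_eq_mul, hTstar.1]
      have hAW : Disjoint A W := by
        rw [Finset.disjoint_right]
        intro u huW huA
        rcases Finset.mem_biUnion.mp huW with ⟨e, he, hue⟩
        exact (Finset.disjoint_left.mp (hTdisj e he) hue) huA
      have hdegs : ∀ v ∈ A, (l' + 1) + (W ∪ A).card + k' * ((l' + 1) * (r' + 2))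
          ≤ hdeg H v := by
        intro v hv
        have h1 : D ≤ hdeg H v := (Finset.mem_filter.mp hv).2
        have h2 : (W ∪ A).card ≤ W.card + A.card := Finset.card_union_le _ _
        have h3 : (k' + 1) * ((l' + 1) * (r' + 2))
            = k' * ((l' + 1) * (r' + 2)) + (l' + 1) * (r' + 2) := by ring
        omega
      obtain ⟨S, x, h1, h2, h3⟩ := pack H hlin (r' + 2) (l' + 1) huni k' A W heq hAW hdegs
      exact hno (combine H (l' + 1) k' S x h1 h2 T w hTsub hTstar
        (fun e he i f hf => ((h3 i f hf).mono_right (heW e he)).symm))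
    -- degree bound for vertices outside A
    have hout : ∀ w ∈ Finset.univ.filter (fun v : Fin (p + k' + 1) => ¬ D ≤ hdeg H v),
        hdeg H w ≤ l' + k' := by
      intro w hw
      have hwA : w ∉ A := by
        intro hc
        exact (Finset.mem_filter.mp hw).2 (Finset.mem_filter.mp hc).2
      have h1 := claim w hwA
      have h2 := meet_card_le H hlin w A hwA
      have h3 := hdeg_split H w A
      have h4 : A.card = k' := heq
      omega
    have hcardB : (Finset.univ.filter (fun v : Fin (p + k' + 1) => ¬ D ≤ hdeg H v)).card
        = p + 1 := by
      have h := Finset.card_filter_add_card_filter_not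
        (s := (Finset.univ : Finset (Fin (p + k' + 1)))) (fun v => D ≤ hdeg H v)
      rw [Finset.card_univ, Fintype.card_fin] at h
      have h2 : A.card = k' := heq
      rw [hA_def] at h2
      omega
    have key : (r' + 1) * ((r' + 2) * H.card)
        ≤ k' * (p + k') + (r' + 1) * ((p + 1) * (l' + k')) := by
      have e1 : ∑ v ∈ A, hdeg H v
          + ∑ v ∈ Finset.univ.filter (fun v : Fin (p + k' + 1) => ¬ D ≤ hdeg H v), hdeg H v
          = (r' + 2) * H.card := by
        rw [← handshake H (r' + 2) huni]
        exact Finset.sum_filter_add_sum_filter_not Finset.univ _ (hdeg H)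
      have hSA : ∑ v ∈ A, (r' + 1) * hdeg H v ≤ k' * (p + k') := by
        calc ∑ v ∈ A, (r' + 1) * hdeg H v ≤ A.card * (p + k') := by
              rw [← smul_eq_mul]
              exact Finset.sum_le_card_nsmul _ _ _ (fun v _ => hinA v)
          _ = k' * (p + k') := by rw [heq]
      have hSB : ∑ v ∈ Finset.univ.filter (fun v : Fin (p + k' + 1) => ¬ D ≤ hdeg H v),
          hdeg H v ≤ (p + 1) * (l' + k') := by
        calc _ ≤ (Finset.univ.filter (fun v : Fin (p + k' + 1) => ¬ D ≤ hdeg H v)).card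
              * (l' + k') := by
              rw [← smul_eq_mul]
              exact Finset.sum_le_card_nsmul _ _ _ hout
          _ = (p + 1) * (l' + k') := by rw [hcardB]
      have e2 : (r' + 1) * ((r' + 2) * H.card)
          = ∑ v ∈ A, (r' + 1) * hdeg H v
            + (r' + 1) * ∑ v ∈ Finset.univ.filter
                (fun v : Fin (p + k' + 1) => ¬ D ≤ hdeg H v), hdeg H v := by
        rw [← e1, Nat.mul_add, Finset.mul_sum]
      have hSB' := Nat.mul_le_mul_left (r' + 1) hSB
      omega
    have hkey : ((r' : ℝ) + 1) * (((r' : ℝ) + 2) * (H.card : ℝ))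
        ≤ (k' : ℝ) * ((p : ℝ) + k') + ((r' : ℝ) + 1) * (((p : ℝ) + 1) * ((l' : ℝ) + k')) := by
      exact_mod_cast key
    have hpos : (0 : ℝ) < ((r' : ℝ) + 1) * ((r' : ℝ) + 2) := by positivity
    have key2 : (H.card : ℝ) ≤ ((k' : ℝ) * ((p : ℝ) + k')
        + ((r' : ℝ) + 1) * (((p : ℝ) + 1) * ((l' : ℝ) + k'))) / (((r' : ℝ) + 1) * ((r' : ℝ) + 2)) := by
      rw [le_div_iff₀ hpos]
      linarith [hkey]
    refine le_trans key2 (le_of_eq ?_)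
    rw [show (k' + 1 - 1) = k' from rfl]
    rw [Nat.cast_choose_two ℝ k', Nat.cast_choose_two ℝ (r' + 2)]
    push_cast
    have hr1 : ((r' : ℝ) + 1) ≠ 0 := by positivity
    have hr2 : ((r' : ℝ) + 2) ≠ 0 := by positivity
    have h3 : ((r' : ℝ) + 2 - 1) = (r' : ℝ) + 1 := by ring
    rw [h3]
    field_simp
    ring
end
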